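/- arXiv:2505.01703 — 6 statements merged into one kernel-verified Lean document; each statement's English description precedes it below -/
import Mathlib

section
/- For every x > 0, the function r ↦ r²·(K₀(r)² − K₁(r)²) is differentiable at x with derivative 2x·K₀(x)²; that is, (d/dr) r²[K₀(r)² − K₁(r)²] = 2r·K₀(r)² for all r > 0. -/
open MeasureTheory Set

/-- The Macdonald function `K_ν(x) = (x^ν / 2^(ν+1)) ∫₀^∞ e^{-s - x²/(4s)} s^{-ν-1} ds`. -/
noncomputable def besselK (ν x : ℝ) : ℝ :=
  (x ^ ν / 2 ^ (ν + 1)) *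
    ∫ s in Set.Ioi (0 : ℝ), Real.exp (-s - x ^ 2 / (4 * s)) * s ^ (-ν - 1)

/-!
With `I_p(a) = ∫₀^∞ e^{-s - a/s} s^p ds` one has `K_ν(x) = x^ν / 2^(ν+1) · I_{-ν-1}(x²/4)`.
Differentiating under the integral sign gives `I_p' = -I_{p-1}`, hence
`K_ν' = (ν/x) K_ν - K_{ν+1}`; integrating `(e^{-s - a/s} s^p)'` over `(0, ∞)` gives
`I_p = a I_{p-2} + p I_{p-1}`, i.e. `K_{ν+1} = K_{ν-1} + (2ν/x) K_ν`.
Thus `K₀' = -K₁` and `K₁' = -K₀ - K₁/x`, and the product rule collapses the derivative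
of `r²(K₀² - K₁²)` to `2r K₀²`.
-/

open Real Filter Topology

/-- Redefining `f` at `a` turns the one-sided limit into the continuity at `a` required by
`integral_Ioi_of_hasDerivAt_of_tendsto`; the limit at `+∞` is forced by integrability. -/
theorem integral_Ioi_eq_zero_of_hasDerivAt_of_integrableOn {E : Type*} [NormedAddCommGroup E]
    [NormedSpace ℝ E] [CompleteSpace E] {f f' : ℝ → E} {a : ℝ}
    (hderiv : ∀ x ∈ Ioi a, HasDerivAt f (f' x) x) (f'int : IntegrableOn f' (Ioi a))
    (fint : IntegrableOn f (Ioi a)) (hleft : Tendsto f (𝓝[>] a) (𝓝 0)) :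
    ∫ x in Ioi a, f' x = 0 := by
  classical
  have hupdate : ∀ x ∈ Ioi a, HasDerivAt (Function.update f a 0) (f' x) x := fun x hx =>
    (hderiv x hx).congr_of_eventuallyEq <| (eventually_ne_nhds (ne_of_gt hx)).mono
      fun y hy => Function.update_of_ne hy _ _
  have hcont : ContinuousWithinAt (Function.update f a 0) (Ici a) a := by
    rwa [continuousWithinAt_update_same, Ici_sdiff_left]
  have htop : Tendsto (Function.update f a 0) atTop (𝓝 0) :=
    (tendsto_zero_of_hasDerivAt_of_integrableOn_Ioi hderiv f'int fint).congr' <|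
      (eventually_ne_atTop a).mono fun y hy => (Function.update_of_ne hy _ _).symm
  rw [integral_Ioi_of_hasDerivAt_of_tendsto hcont hupdate f'int htop, Function.update_self,
    sub_zero]

theorem exp_neg_div_le_factorial_mul_pow {a s : ℝ} (ha : 0 < a) (hs : 0 < s) (m : ℕ) :
    rexp (-(a / s)) ≤ m.factorial * (s / a) ^ m :=
  calc rexp (-(a / s)) ≤ ((a / s) ^ m / m.factorial)⁻¹ := by
        rw [exp_neg]
        exact inv_anti₀ (by positivity) (pow_div_factorial_le_exp _ (by positivity) m)
    _ = m.factorial * (s / a) ^ m := by rw [inv_div, div_eq_mul_inv, ← inv_pow, inv_div]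

noncomputable def macdonaldIntegrand (p a s : ℝ) : ℝ := rexp (-s - a / s) * s ^ p

noncomputable def macdonaldIntegral (p a : ℝ) : ℝ := ∫ s in Ioi 0, macdonaldIntegrand p a s

theorem macdonaldIntegrand_nonneg (p a : ℝ) {s : ℝ} (hs : 0 ≤ s) :
    0 ≤ macdonaldIntegrand p a s :=
  mul_nonneg (exp_pos _).le (rpow_nonneg hs p)

theorem macdonaldIntegrand_le_of_le (p : ℝ) {a b s : ℝ} (hs : 0 < s) (hab : a ≤ b) :
    macdonaldIntegrand p b s ≤ macdonaldIntegrand p a s := by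
  unfold macdonaldIntegrand
  gcongr

theorem continuousOn_macdonaldIntegrand (p a : ℝ) :
    ContinuousOn (macdonaldIntegrand p a) (Ioi 0) := by
  unfold macdonaldIntegrand
  refine ContinuousOn.mul ?_ ?_
  · fun_prop (disch := intro s hs; exact ne_of_gt hs)
  · exact continuousOn_id.rpow_const fun s hs => Or.inl (ne_of_gt hs)

theorem macdonaldIntegrand_le (p : ℝ) {a s : ℝ} (ha : 0 < a) (hs : 0 < s) (m : ℕ) :
    macdonaldIntegrand p a s ≤ m.factorial / a ^ m * (rexp (-s) * s ^ (p + m)) := by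
  have hsplit : rexp (-s - a / s) = rexp (-s) * rexp (-(a / s)) := by
    rw [← exp_add, sub_eq_add_neg]
  calc macdonaldIntegrand p a s = rexp (-s) * rexp (-(a / s)) * s ^ p := by
        rw [macdonaldIntegrand, hsplit]
    _ ≤ rexp (-s) * (m.factorial * (s / a) ^ m) * s ^ p := by
        gcongr
        exact exp_neg_div_le_factorial_mul_pow ha hs m
    _ = m.factorial / a ^ m * (rexp (-s) * s ^ (p + m)) := by
        rw [rpow_add hs, rpow_natCast, div_pow]
        ring

theorem integrableOn_macdonaldIntegrand (p : ℝ) {a : ℝ} (ha : 0 < a) :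
    IntegrableOn (macdonaldIntegrand p a) (Ioi 0) := by
  obtain ⟨m, hm⟩ := exists_nat_gt (-p)
  have hgamma := (GammaIntegral_convergent (s := p + m + 1) (by linarith)).const_mul
    (m.factorial / a ^ m)
  simp only [add_sub_cancel_right] at hgamma
  refine hgamma.mono' ((continuousOn_macdonaldIntegrand p a).aestronglyMeasurable
    measurableSet_Ioi) ?_
  filter_upwards [self_mem_ae_restrict measurableSet_Ioi] with s hs
  rw [norm_of_nonneg (macdonaldIntegrand_nonneg p a (le_of_lt hs))]
  exact macdonaldIntegrand_le p ha hs m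

theorem tendsto_macdonaldIntegrand_nhdsGT_zero (p : ℝ) {a : ℝ} (ha : 0 < a) :
    Tendsto (macdonaldIntegrand p a) (𝓝[>] 0) (𝓝 0) := by
  obtain ⟨m, hm⟩ := exists_nat_gt (-p)
  have hbound : Tendsto (fun s => m.factorial / a ^ m * (rexp (-s) * s ^ (p + m))) (𝓝[>] 0)
      (𝓝 0) := by
    have hcont : ContinuousAt (fun s => m.factorial / a ^ m * (rexp (-s) * s ^ (p + m))) 0 :=
      continuousAt_const.mul (continuous_neg.rexp.continuousAt.mul
        (continuousAt_id.rpow_const (Or.inr (by linarith))))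
    simpa [zero_rpow (by linarith : p + m ≠ 0)] using hcont.tendsto.mono_left nhdsWithin_le_nhds
  refine tendsto_of_tendsto_of_tendsto_of_le_of_le' tendsto_const_nhds hbound ?_ ?_
  · filter_upwards [self_mem_nhdsWithin] with s hs
    exact macdonaldIntegrand_nonneg p a (le_of_lt hs)
  · filter_upwards [self_mem_nhdsWithin] with s hs
    exact macdonaldIntegrand_le p ha hs m

theorem hasDerivAt_macdonaldIntegrand_param (p : ℝ) {s : ℝ} (hs : 0 < s) (b : ℝ) :
    HasDerivAt (fun b => macdonaldIntegrand p b s) (-macdonaldIntegrand (p - 1) b s) b := by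
  have hexp : HasDerivAt (fun b => rexp (-s - b / s)) (rexp (-s - b / s) * -(1 / s)) b :=
    (((hasDerivAt_id b).div_const s).const_sub (-s)).exp
  refine (hexp.mul_const (s ^ p)).congr_deriv ?_
  rw [macdonaldIntegrand, rpow_sub_one hs.ne']
  ring

theorem hasDerivAt_macdonaldIntegrand (p a : ℝ) {s : ℝ} (hs : 0 < s) :
    HasDerivAt (macdonaldIntegrand p a)
      (a * macdonaldIntegrand (p - 2) a s + p * macdonaldIntegrand (p - 1) a s -
        macdonaldIntegrand p a s) s := by
  have hexp : HasDerivAt (fun s => rexp (-s - a / s)) (rexp (-s - a / s) * (-1 + a / s ^ 2)) s := by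
    have hinner : HasDerivAt (fun s => -s - a / s) (-1 + a / s ^ 2) s := by
      have := (hasDerivAt_neg s).sub ((hasDerivAt_inv hs.ne').const_mul a)
      simp only [← div_eq_mul_inv] at this
      exact this.congr_deriv (by ring)
    exact hinner.exp
  refine (hexp.mul (hasDerivAt_rpow_const (p := p) (Or.inl hs.ne'))).congr_deriv ?_
  rw [macdonaldIntegrand, macdonaldIntegrand, macdonaldIntegrand, rpow_sub hs p 2,
    rpow_sub_one hs.ne', rpow_two]
  field_simp
  ring

theorem hasDerivAt_macdonaldIntegral (p : ℝ) {a : ℝ} (ha : 0 < a) :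
    HasDerivAt (macdonaldIntegral p) (-macdonaldIntegral (p - 1) a) a := by
  have hball : ∀ b ∈ Metric.ball a (a / 2), a / 2 ≤ b := fun b hb => by
    have := (abs_lt.1 (Real.dist_eq b a ▸ Metric.mem_ball.1 hb)).1
    linarith
  have key := hasDerivAt_integral_of_dominated_loc_of_deriv_le
    (μ := volume.restrict (Ioi 0)) (F := fun b s => macdonaldIntegrand p b s)
    (F' := fun b s => -macdonaldIntegrand (p - 1) b s)
    (bound := macdonaldIntegrand (p - 1) (a / 2))
    (Metric.ball_mem_nhds a (by positivity : 0 < a / 2))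
    (Eventually.of_forall fun b => (continuousOn_macdonaldIntegrand p b).aestronglyMeasurable
      measurableSet_Ioi)
    (integrableOn_macdonaldIntegrand p ha)
    ((continuousOn_macdonaldIntegrand (p - 1) a).neg.aestronglyMeasurable measurableSet_Ioi)
    ?_ (integrableOn_macdonaldIntegrand (p - 1) (by positivity))
    ?_
  · rw [integral_neg] at key
    exact key.2
  · filter_upwards [self_mem_ae_restrict measurableSet_Ioi] with s hs b hb
    rw [norm_neg, norm_of_nonneg (macdonaldIntegrand_nonneg _ _ (le_of_lt hs))]
    exact macdonaldIntegrand_le_of_le _ hs (hball b hb)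
  · filter_upwards [self_mem_ae_restrict measurableSet_Ioi] with s hs b _
    exact hasDerivAt_macdonaldIntegrand_param p hs b

theorem macdonaldIntegral_eq_mul_add_mul (p : ℝ) {a : ℝ} (ha : 0 < a) :
    macdonaldIntegral p a =
      a * macdonaldIntegral (p - 2) a + p * macdonaldIntegral (p - 1) a := by
  have hint : ∀ q, IntegrableOn (macdonaldIntegrand q a) (Ioi 0) := fun q =>
    integrableOn_macdonaldIntegrand q ha
  have hzero := integral_Ioi_eq_zero_of_hasDerivAt_of_integrableOn
    (fun s hs => hasDerivAt_macdonaldIntegrand p a hs)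
    ((((hint _).const_mul a).add ((hint _).const_mul p)).sub (hint p)) (hint p)
    (tendsto_macdonaldIntegrand_nhdsGT_zero p ha)
  have hsum : IntegrableOn
      (fun s => a * macdonaldIntegrand (p - 2) a s + p * macdonaldIntegrand (p - 1) a s) (Ioi 0) :=
    ((hint _).const_mul a).add ((hint _).const_mul p)
  rw [integral_sub hsum (hint p),
    integral_add ((hint _).const_mul a) ((hint _).const_mul p), integral_const_mul,
    integral_const_mul] at hzero
  simp only [macdonaldIntegral]
  linarith

theorem besselK_eq_macdonaldIntegral (ν x : ℝ) :
    besselK ν x = x ^ ν / 2 ^ (ν + 1) * macdonaldIntegral (-ν - 1) (x ^ 2 / 4) := by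
  simp only [besselK, macdonaldIntegral, macdonaldIntegrand, div_div]

theorem hasDerivAt_besselK (ν : ℝ) {x : ℝ} (hx : 0 < x) :
    HasDerivAt (besselK ν) (ν / x * besselK ν x - besselK (ν + 1) x) x := by
  have hI := (hasDerivAt_macdonaldIntegral (-ν - 1) (by positivity : 0 < x ^ 2 / 4)).comp x
    ((hasDerivAt_pow 2 x).div_const 4)
  have hpow := (hasDerivAt_rpow_const (p := ν) (Or.inl hx.ne')).div_const (2 ^ (ν + 1))
  rw [funext (besselK_eq_macdonaldIntegral ν)]
  refine (hpow.mul hI).congr_deriv ?_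
  simp only [Function.comp_apply, besselK_eq_macdonaldIntegral,
    show -(ν + 1) - 1 = -ν - 1 - 1 by ring, rpow_sub_one hx.ne', rpow_add_one hx.ne',
    rpow_add_one two_ne_zero]
  field_simp
  ring

theorem besselK_add_one (ν : ℝ) {x : ℝ} (hx : 0 < x) :
    besselK (ν + 1) x = besselK (ν - 1) x + 2 * ν / x * besselK ν x := by
  have hrec := macdonaldIntegral_eq_mul_add_mul (-ν) (by positivity : 0 < x ^ 2 / 4)
  simp only [besselK_eq_macdonaldIntegral, show -(ν + 1) - 1 = -ν - 2 by ring,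
    show -(ν - 1) - 1 = -ν by ring, sub_add_cancel, rpow_sub_one hx.ne', rpow_add_one hx.ne',
    rpow_add_one two_ne_zero, hrec]
  field_simp
  ring

/-- `(d/dr) r²[K₀(r)² − K₁(r)²] = 2 r K₀(r)²` for all `r > 0`. -/
theorem stmt1 (x : ℝ) (hx : 0 < x) :
    HasDerivAt (fun r : ℝ => r ^ 2 * ((besselK 0 r) ^ 2 - (besselK 1 r) ^ 2))
      (2 * x * (besselK 0 x) ^ 2) x := by
  have hK0 : HasDerivAt (besselK 0) (-besselK 1 x) x := by
    simpa using hasDerivAt_besselK 0 hx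
  have hK1 := hasDerivAt_besselK 1 hx
  have hrec := besselK_add_one 1 hx
  rw [one_add_one_eq_two] at hK1 hrec
  rw [sub_self, mul_one] at hrec
  refine ((hasDerivAt_pow 2 x).mul ((hK0.pow 2).sub (hK1.pow 2))).congr_deriv ?_
  simp only [Pi.sub_apply, Pi.pow_apply, hrec]
  field_simp
  ring
end

section
/- Fix 0 < T < ∞. Let f, g : (0,T) → [0,∞) be such that f is bounded on every compact subset of (0,T), g is continuous on (0,T), and both f and g are Lebesgue integrable on (0,T). Then the convolution f⋆g(t) = ∫₀^t f(s)·g(t−s) ds is finite for every t ∈ (0,T), belongs to L¹((0,T)), and is continuous on (0,T). -/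
/-!
Extend `f` and `g` by zero outside `(0,T)`. On `(0,T)` the full-line convolution of the
extensions is the truncated one, so integrability is `L¹ ⋆ L¹ ⊆ L¹`. For continuity at `t₀`, split
the integral at `c = t₀ - δ`. For `s ≤ c` the argument `τ - s` stays in a compact subset of `(0,T)`
where `g` is continuous and bounded, so dominated convergence applies. For `s > c` the factor `f`
is bounded by some `M` near `t₀`, so this part is at most `M ∫₀^{2δ} |g|`, uniformly small as
`δ → 0`. A function that is locally uniformly approximable by functions continuous at `t₀` is
continuous at `t₀`.
-/

open MeasureTheory Set Filter Topology
open scoped Convolution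
open ContinuousLinearMap (lsmul)

section SupportIoi

variable {F G : ℝ → ℝ} {c τ C : ℝ}

theorem norm_indicator_Iic_mul_le (hF0 : ∀ s ≤ 0, F s = 0)
    (hGb : ∀ u ∈ Ico (τ - c) τ, ‖G u‖ ≤ C) (s : ℝ) :
    ‖(Iic c).indicator (fun s => F s * G (τ - s)) s‖ ≤
      (Iic c).indicator (fun s => C * ‖F s‖) s := by
  by_cases hsc : s ∈ Iic c
  · rw [indicator_of_mem hsc, indicator_of_mem hsc]
    rcases le_or_gt s 0 with hs0 | hs0
    · simp [hF0 s hs0]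
    · rw [norm_mul, mul_comm C]
      exact mul_le_mul_of_nonneg_left (hGb _ ⟨by linarith [mem_Iic.1 hsc], by linarith⟩)
        (norm_nonneg _)
  · simp [indicator_of_notMem hsc]

theorem norm_indicator_Ioi_mul_le (hG0 : ∀ u ≤ 0, G u = 0)
    (hFb : ∀ s ∈ Ioo c τ, ‖F s‖ ≤ C) (s : ℝ) :
    ‖(Ioi c).indicator (fun s => F s * G (τ - s)) s‖ ≤
      (Ioo c τ).indicator (fun s => C * ‖G (τ - s)‖) s := by
  by_cases hsc : s ∈ Ioi c
  · rw [indicator_of_mem hsc]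
    rcases lt_or_ge s τ with hsτ | hsτ
    · rw [indicator_of_mem (show s ∈ Ioo c τ from ⟨hsc, hsτ⟩), norm_mul]
      exact mul_le_mul_of_nonneg_right (hFb s ⟨hsc, hsτ⟩) (norm_nonneg _)
    · simp [hG0 (τ - s) (by linarith), indicator_of_notMem fun h : s ∈ Ioo c τ => hsτ.not_gt h.2]
  · simp [indicator_of_notMem hsc, indicator_of_notMem fun h : s ∈ Ioo c τ => hsc h.1]

theorem integrable_indicator_Iic_mul (hF : Integrable F) (hG : AEStronglyMeasurable G)
    (hF0 : ∀ s ≤ 0, F s = 0) (hGb : ∀ u ∈ Ico (τ - c) τ, ‖G u‖ ≤ C) :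
    Integrable ((Iic c).indicator fun s => F s * G (τ - s)) :=
  ((hF.norm.const_mul C).indicator measurableSet_Iic).mono'
    ((hF.aestronglyMeasurable.convolution_integrand_snd (lsmul ℝ ℝ) hG τ).indicator
      measurableSet_Iic)
    (Eventually.of_forall (norm_indicator_Iic_mul_le hF0 hGb))

theorem integrable_indicator_Ioi_mul (hF : AEStronglyMeasurable F) (hG : Integrable G)
    (hG0 : ∀ u ≤ 0, G u = 0) (hFb : ∀ s ∈ Ioo c τ, ‖F s‖ ≤ C) :
    Integrable ((Ioi c).indicator fun s => F s * G (τ - s)) :=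
  (((hG.comp_sub_left τ).norm.const_mul C).indicator measurableSet_Ioo).mono'
    ((hF.convolution_integrand_snd (lsmul ℝ ℝ) hG.aestronglyMeasurable τ).indicator
      measurableSet_Ioi)
    (Eventually.of_forall (norm_indicator_Ioi_mul_le hG0 hFb))

theorem norm_integral_indicator_Ioi_mul_le (hG : Integrable G) (hG0 : ∀ u ≤ 0, G u = 0)
    (hcτ : c ≤ τ) (hFb : ∀ s ∈ Ioo c τ, ‖F s‖ ≤ C) :
    ‖∫ s, (Ioi c).indicator (fun s => F s * G (τ - s)) s‖ ≤ C * ∫ u in 0..τ - c, ‖G u‖ :=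
  calc ‖∫ s, (Ioi c).indicator (fun s => F s * G (τ - s)) s‖
      ≤ ∫ s, (Ioo c τ).indicator (fun s => C * ‖G (τ - s)‖) s :=
        norm_integral_le_of_norm_le
          (((hG.comp_sub_left τ).norm.const_mul C).indicator measurableSet_Ioo)
          (Eventually.of_forall (norm_indicator_Ioi_mul_le hG0 hFb))
    _ = C * ∫ u in 0..τ - c, ‖G u‖ := by
        rw [integral_indicator measurableSet_Ioo, integral_const_mul,
          ← integral_Ioc_eq_integral_Ioo, ← intervalIntegral.integral_of_le hcτ,
          intervalIntegral.integral_comp_sub_left (fun u => ‖G u‖), sub_self]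

theorem convolution_eq_integral_indicator_Iic_add
    (hhead : Integrable ((Iic c).indicator fun s => F s * G (τ - s)))
    (htail : Integrable ((Ioi c).indicator fun s => F s * G (τ - s))) :
    (F ⋆ G) τ = (∫ s, (Iic c).indicator (fun s => F s * G (τ - s)) s) +
      ∫ s, (Ioi c).indicator (fun s => F s * G (τ - s)) s := by
  rw [← integral_add hhead htail, ← compl_Iic]
  simp_rw [indicator_self_add_compl_apply]
  rfl

theorem convolutionExistsAt_of_local_bounds (hF : Integrable F) (hG : Integrable G)
    (hF0 : ∀ s ≤ 0, F s = 0) (hG0 : ∀ u ≤ 0, G u = 0) {CF CG : ℝ}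
    (hFb : ∀ s ∈ Ioo c τ, ‖F s‖ ≤ CF) (hGb : ∀ u ∈ Ico (τ - c) τ, ‖G u‖ ≤ CG) :
    ConvolutionExistsAt F G τ (lsmul ℝ ℝ) := by
  change Integrable fun s => F s * G (τ - s)
  rw [← indicator_self_add_compl (Iic c) fun s => F s * G (τ - s), compl_Iic]
  exact (integrable_indicator_Iic_mul hF hG.aestronglyMeasurable hF0 hGb).add
    (integrable_indicator_Ioi_mul hF.aestronglyMeasurable hG hG0 hFb)

theorem continuousAt_integral_indicator_Iic_mul (hF : Integrable F) (hG : AEStronglyMeasurable G)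
    (hF0 : ∀ s ≤ 0, F s = 0) {t₀ r : ℝ} (hr : 0 < r)
    (hGb : ∀ u ∈ Icc (t₀ - r - c) (t₀ + r), ‖G u‖ ≤ C)
    (hGc : ∀ u ∈ Ico (t₀ - c) t₀, ContinuousAt G u) :
    ContinuousAt (fun τ => ∫ s, (Iic c).indicator (fun s => F s * G (τ - s)) s) t₀ := by
  have hnear : ∀ τ ∈ Ioo (t₀ - r) (t₀ + r), ∀ u ∈ Ico (τ - c) τ, ‖G u‖ ≤ C :=
    fun τ hτ u hu => hGb u ⟨by linarith [hτ.1, hu.1], by linarith [hτ.2, hu.2]⟩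
  refine continuousAt_of_dominated (bound := (Iic c).indicator fun s => C * ‖F s‖)
    (Eventually.of_forall fun τ =>
      ((hF.aestronglyMeasurable.convolution_integrand_snd (lsmul ℝ ℝ) hG τ).indicator
        measurableSet_Iic))
    (eventually_of_mem (Ioo_mem_nhds (by linarith) (by linarith)) fun τ hτ =>
      Eventually.of_forall (norm_indicator_Iic_mul_le hF0 (hnear τ hτ)))
    ((hF.norm.const_mul C).indicator measurableSet_Iic) (Eventually.of_forall fun s => ?_)
  by_cases hsc : s ∈ Iic c
  · simp only [indicator_of_mem hsc]
    rcases le_or_gt s 0 with hs0 | hs0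
    · simp only [hF0 s hs0, zero_mul, continuousAt_const]
    · exact continuousAt_const.mul ((hGc _ ⟨by linarith [mem_Iic.1 hsc], by linarith⟩).comp
        (continuousAt_id.sub continuousAt_const))
  · simp only [indicator_of_notMem hsc, continuousAt_const]

theorem continuousAt_convolution_of_local_bounds (hF : Integrable F) (hG : Integrable G)
    (hF0 : ∀ s ≤ 0, F s = 0) (hG0 : ∀ u ≤ 0, G u = 0) {t₀ r M : ℝ} (hr : 0 < r)
    (hFb : ∀ s ∈ Ioo (t₀ - r) (t₀ + r), ‖F s‖ ≤ M) (hGc : ContinuousOn G (Ioo 0 (t₀ + r))) :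
    ContinuousAt (F ⋆ G) t₀ := by
  refine continuousAt_of_locally_uniform_approx_of_continuousAt fun U hU => ?_
  obtain ⟨ε, hε, hεU⟩ := Metric.mem_uniformity_dist.1 hU
  obtain ⟨δ₁, hδ₁, hsmall⟩ : ∃ δ₁ > 0, ∀ ⦃x⦄, dist x 0 < δ₁ → M * ∫ u in 0..x, ‖G u‖ < ε := by
    refine Metric.eventually_nhds_iff.1 (Tendsto.eventually_lt_const hε ?_)
    simpa using ((hG.norm.continuous_primitive 0).tendsto 0).const_mul M
  set δ := min (δ₁ / 2) (r / 2)
  have hδ0 : 0 < δ := lt_min (by linarith) (by linarith)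
  have hδ₁' : δ ≤ δ₁ / 2 := min_le_left _ _
  have hδr : δ ≤ r / 2 := min_le_right _ _
  obtain ⟨CG, hCG⟩ := (isCompact_Icc (a := δ / 2) (b := t₀ + δ / 2)).exists_bound_of_continuousOn
    (hGc.mono fun u hu => ⟨by linarith [hu.1], by linarith [hu.2]⟩)
  set c := t₀ - δ
  refine ⟨Ioo (t₀ - δ / 2) (t₀ + δ / 2), Ioo_mem_nhds (by linarith) (by linarith),
    fun τ => ∫ s, (Iic c).indicator (fun s => F s * G (τ - s)) s,
    continuousAt_integral_indicator_Iic_mul hF hG.aestronglyMeasurable hF0 (half_pos hδ0)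
      (fun u hu => hCG u ⟨by linarith [hu.1], hu.2⟩)
      (fun u hu => hGc.continuousAt (isOpen_Ioo.mem_nhds ⟨by linarith [hu.1], by linarith [hu.2]⟩)),
    fun τ hτ => hεU ?_⟩
  have hFτ : ∀ s ∈ Ioo c τ, ‖F s‖ ≤ M :=
    fun s hs => hFb s ⟨by linarith [hs.1], by linarith [hs.2, hτ.2]⟩
  have hGτ : ∀ u ∈ Ico (τ - c) τ, ‖G u‖ ≤ CG :=
    fun u hu => hCG u ⟨by linarith [hu.1, hτ.1], by linarith [hu.2, hτ.2]⟩
  rw [convolution_eq_integral_indicator_Iic_add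
    (integrable_indicator_Iic_mul hF hG.aestronglyMeasurable hF0 hGτ)
    (integrable_indicator_Ioi_mul hF.aestronglyMeasurable hG hG0 hFτ), dist_eq_norm,
    add_sub_cancel_left]
  refine (norm_integral_indicator_Ioi_mul_le hG hG0 (by linarith [hτ.1]) hFτ).trans_lt
    (hsmall ?_)
  rw [Real.dist_eq, sub_zero, abs_lt]
  constructor <;> linarith [hτ.1, hτ.2]

variable {T : ℝ}

theorem convolutionExistsAt_of_boundedOn_of_continuousOn (hF : Integrable F) (hG : Integrable G)
    (hF0 : ∀ s ≤ 0, F s = 0) (hG0 : ∀ u ≤ 0, G u = 0)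
    (hFb : ∀ K ⊆ Ioo 0 T, IsCompact K → ∃ C, ∀ s ∈ K, ‖F s‖ ≤ C)
    (hGc : ContinuousOn G (Ioo 0 T)) {t : ℝ} (ht : t ∈ Ioo 0 T) :
    ConvolutionExistsAt F G t (lsmul ℝ ℝ) := by
  have hK : Icc (t / 2) t ⊆ Ioo 0 T :=
    fun s hs => ⟨by linarith [hs.1, ht.1], by linarith [hs.2, ht.2]⟩
  obtain ⟨CF, hCF⟩ := hFb _ hK isCompact_Icc
  obtain ⟨CG, hCG⟩ := isCompact_Icc.exists_bound_of_continuousOn (hGc.mono hK)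
  exact convolutionExistsAt_of_local_bounds (c := t / 2) hF hG hF0 hG0
    (fun s hs => hCF s ⟨hs.1.le, hs.2.le⟩)
    (fun u hu => hCG u ⟨by linarith [hu.1], hu.2.le⟩)

theorem continuousOn_convolution_of_boundedOn_of_continuousOn (hF : Integrable F)
    (hG : Integrable G) (hF0 : ∀ s ≤ 0, F s = 0) (hG0 : ∀ u ≤ 0, G u = 0)
    (hFb : ∀ K ⊆ Ioo 0 T, IsCompact K → ∃ C, ∀ s ∈ K, ‖F s‖ ≤ C)
    (hGc : ContinuousOn G (Ioo 0 T)) :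
    ContinuousOn (F ⋆ G) (Ioo 0 T) := by
  intro t₀ ht₀
  set r := min (t₀ / 2) ((T - t₀) / 2)
  have hr : 0 < r := lt_min (by linarith [ht₀.1]) (by linarith [ht₀.2])
  have hrt : r ≤ t₀ / 2 := min_le_left _ _
  have hrT : r ≤ (T - t₀) / 2 := min_le_right _ _
  have hK : Icc (t₀ - r) (t₀ + r) ⊆ Ioo 0 T :=
    fun s hs => ⟨by linarith [hs.1], by linarith [hs.2]⟩
  obtain ⟨M, hM⟩ := hFb _ hK isCompact_Icc
  exact (continuousAt_convolution_of_local_bounds hF hG hF0 hG0 hr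
    (fun s hs => hM s (Ioo_subset_Icc_self hs))
    (hGc.mono (Ioo_subset_Ioo_right (by linarith)))).continuousWithinAt

end SupportIoi

theorem indicator_Ioo_mul_indicator_Ioo_sub {f g : ℝ → ℝ} {t T : ℝ} (htT : t ≤ T) :
    (fun s => (Ioo 0 T).indicator f s * (Ioo 0 T).indicator g (t - s)) =
      (Ioo 0 t).indicator fun s => f s * g (t - s) := by
  ext s
  by_cases hs : s ∈ Ioo 0 t
  · rw [indicator_of_mem hs, indicator_of_mem (Ioo_subset_Ioo_right htT hs),
      indicator_of_mem (show t - s ∈ Ioo 0 T from ⟨by linarith [hs.2], by linarith [hs.1]⟩)]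
  · rw [indicator_of_notMem hs]
    rcases le_or_gt s 0 with hs0 | hs0
    · rw [indicator_of_notMem fun h : s ∈ Ioo 0 T => hs0.not_gt h.1, zero_mul]
    · rw [indicator_of_notMem fun h : t - s ∈ Ioo 0 T => hs ⟨hs0, by linarith [h.1]⟩, mul_zero]

theorem convolution_indicator_Ioo {f g : ℝ → ℝ} {t T : ℝ} (htT : t ≤ T) :
    ((Ioo 0 T).indicator f ⋆ (Ioo 0 T).indicator g) t = ∫ s in Ioo 0 t, f s * g (t - s) := by
  rw [convolution_lsmul, ← integral_indicator measurableSet_Ioo,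
    ← indicator_Ioo_mul_indicator_Ioo_sub htT]
  rfl

theorem convolutionExistsAt_indicator_Ioo_iff {f g : ℝ → ℝ} {t T : ℝ} (htT : t ≤ T) :
    ConvolutionExistsAt ((Ioo 0 T).indicator f) ((Ioo 0 T).indicator g) t (lsmul ℝ ℝ) ↔
      IntegrableOn (fun s => f s * g (t - s)) (Ioo 0 t) := by
  rw [← integrable_indicator_iff measurableSet_Ioo, ← indicator_Ioo_mul_indicator_Ioo_sub htT]
  rfl

theorem stmt4_general (T : ℝ) (f g : ℝ → ℝ)
    (hf_nonneg : ∀ t ∈ Set.Ioo (0 : ℝ) T, 0 ≤ f t)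
    (hf_bdd : ∀ K ⊆ Set.Ioo (0 : ℝ) T, IsCompact K → BddAbove (f '' K))
    (hg_cont : ContinuousOn g (Set.Ioo 0 T))
    (hf_int : IntegrableOn f (Set.Ioo 0 T))
    (hg_int : IntegrableOn g (Set.Ioo 0 T)) :
    (∀ t ∈ Set.Ioo (0 : ℝ) T, IntegrableOn (fun s => f s * g (t - s)) (Set.Ioo 0 t)) ∧
    IntegrableOn (fun t => ∫ s in Set.Ioo (0 : ℝ) t, f s * g (t - s)) (Set.Ioo 0 T) ∧
    ContinuousOn (fun t => ∫ s in Set.Ioo (0 : ℝ) t, f s * g (t - s)) (Set.Ioo 0 T) := by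
  have hF : Integrable ((Ioo 0 T).indicator f) :=
    (integrable_indicator_iff measurableSet_Ioo).2 hf_int
  have hG : Integrable ((Ioo 0 T).indicator g) :=
    (integrable_indicator_iff measurableSet_Ioo).2 hg_int
  have hF0 : ∀ s ≤ 0, (Ioo 0 T).indicator f s = 0 :=
    fun s hs => indicator_of_notMem (fun h => hs.not_gt h.1) f
  have hG0 : ∀ u ≤ 0, (Ioo 0 T).indicator g u = 0 :=
    fun u hu => indicator_of_notMem (fun h => hu.not_gt h.1) g
  have hFb : ∀ K ⊆ Ioo 0 T, IsCompact K → ∃ C, ∀ s ∈ K, ‖(Ioo 0 T).indicator f s‖ ≤ C := by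
    intro K hK hKc
    obtain ⟨C, hC⟩ := hf_bdd K hK hKc
    refine ⟨C, fun s hs => ?_⟩
    rw [indicator_of_mem (hK hs), Real.norm_of_nonneg (hf_nonneg s (hK hs))]
    exact hC (mem_image_of_mem f hs)
  have hGc : ContinuousOn ((Ioo 0 T).indicator g) (Ioo 0 T) :=
    hg_cont.congr fun u hu => indicator_of_mem hu g
  have hconv : EqOn ((Ioo 0 T).indicator f ⋆ (Ioo 0 T).indicator g)
      (fun t => ∫ s in Ioo 0 t, f s * g (t - s)) (Ioo 0 T) :=
    fun t ht => convolution_indicator_Ioo ht.2.le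
  exact ⟨fun t ht => (convolutionExistsAt_indicator_Ioo_iff ht.2.le).1
      (convolutionExistsAt_of_boundedOn_of_continuousOn hF hG hF0 hG0 hFb hGc ht),
    (hF.integrable_convolution _ hG).integrableOn.congr_fun hconv measurableSet_Ioo,
    (continuousOn_convolution_of_boundedOn_of_continuousOn hF hG hF0 hG0 hFb hGc).congr
      fun t ht => (hconv ht).symm⟩

/-- Convolution of a locally bounded integrable function with a continuous integrable
function on `(0,T)`: `f ⋆ g (t) = ∫₀^t f(s) g(t-s) ds` is well defined (absolutely
convergent) for every `t ∈ (0,T)`, is in `L¹((0,T))`, and is continuous on `(0,T)`. -/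
theorem stmt4 (T : ℝ) (hT : 0 < T) (f g : ℝ → ℝ)
    (hf_nonneg : ∀ t ∈ Set.Ioo (0 : ℝ) T, 0 ≤ f t)
    (hg_nonneg : ∀ t ∈ Set.Ioo (0 : ℝ) T, 0 ≤ g t)
    (hf_bdd : ∀ K ⊆ Set.Ioo (0 : ℝ) T, IsCompact K → BddAbove (f '' K))
    (hg_cont : ContinuousOn g (Set.Ioo 0 T))
    (hf_int : IntegrableOn f (Set.Ioo 0 T))
    (hg_int : IntegrableOn g (Set.Ioo 0 T)) :
    (∀ t ∈ Set.Ioo (0 : ℝ) T, IntegrableOn (fun s => f s * g (t - s)) (Set.Ioo 0 t)) ∧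
    IntegrableOn (fun t => ∫ s in Set.Ioo (0 : ℝ) t, f s * g (t - s)) (Set.Ioo 0 T) ∧
    ContinuousOn (fun t => ∫ s in Set.Ioo (0 : ℝ) t, f s * g (t - s)) (Set.Ioo 0 T) :=
  stmt4_general T f g hf_nonneg hf_bdd hg_cont hf_int hg_int
end

section
/- Let f, g : (0,∞) → [0,∞] be nonincreasing measurable functions. Then for all 0 < s ≤ t, ∫₀^s f(τ)·g(s−τ) dτ ≤ g(s/2)·∫₀^{t/2} f(τ) dτ + f(s/2)·∫₀^{t/2} g(τ) dτ. -/
open MeasureTheory Set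

/-- For nonincreasing measurable `f, g : (0,∞) → [0,∞]` and `0 < s ≤ t`:
`∫₀^s f(τ) g(s-τ) dτ ≤ g(s/2) ∫₀^{t/2} f + f(s/2) ∫₀^{t/2} g`. -/
theorem stmt6 (f g : ℝ → ENNReal)
    (hf_mono : AntitoneOn f (Set.Ioi 0)) (hg_mono : AntitoneOn g (Set.Ioi 0))
    (hf_meas : Measurable f) (hg_meas : Measurable g) :
    ∀ s t : ℝ, 0 < s → s ≤ t →
      ∫⁻ τ in Set.Ioo (0 : ℝ) s, f τ * g (s - τ)
        ≤ g (s / 2) * (∫⁻ τ in Set.Ioo (0 : ℝ) (t / 2), f τ)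
          + f (s / 2) * ∫⁻ τ in Set.Ioo (0 : ℝ) (t / 2), g τ := by
  intro s t hs hst
  have hs2 : (0:ℝ) < s / 2 := by linarith
  have hsub : Set.Ioo (0:ℝ) s = Set.Ioo 0 (s/2) ∪ Set.Ico (s/2) s := by
    rw [Set.Ioo_union_Ico_eq_Ioo (by linarith) (by linarith)]
  have hdisj : Disjoint (Set.Ioo (0:ℝ) (s/2)) (Set.Ico (s/2) s) :=
    Set.disjoint_left.2 fun x hx hx' => absurd hx'.1 (not_le.2 hx.2)
  have hmeas : Measurable fun τ => f τ * g (s - τ) :=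
    (hf_meas).mul (hg_meas.comp (measurable_const.sub measurable_id))
  rw [hsub, lintegral_union measurableSet_Ico hdisj]
  gcongr ?_ + ?_
  · -- on (0, s/2): g (s - τ) ≤ g (s/2)
    calc ∫⁻ τ in Set.Ioo (0:ℝ) (s/2), f τ * g (s - τ)
        ≤ ∫⁻ τ in Set.Ioo (0:ℝ) (s/2), g (s/2) * f τ := by
          refine setLIntegral_mono (measurable_const.mul hf_meas) fun τ hτ => ?_
          rw [mul_comm]
          exact mul_le_mul_left
            (hg_mono (Set.mem_Ioi.2 hs2) (Set.mem_Ioi.2 (by linarith [hτ.1, hτ.2]))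
              (by linarith [hτ.2])) _
      _ = g (s/2) * ∫⁻ τ in Set.Ioo (0:ℝ) (s/2), f τ := lintegral_const_mul _ hf_meas
      _ ≤ g (s/2) * ∫⁻ τ in Set.Ioo (0:ℝ) (t/2), f τ :=
          mul_le_mul_right (lintegral_mono_set (Set.Ioo_subset_Ioo le_rfl (by linarith))) _
  · -- on [s/2, s): f τ ≤ f (s/2), then substitute
    calc ∫⁻ τ in Set.Ico (s/2) s, f τ * g (s - τ)
        ≤ ∫⁻ τ in Set.Ico (s/2) s, f (s/2) * g (s - τ) := by
          refine setLIntegral_mono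
            (measurable_const.mul (hg_meas.comp (measurable_const.sub measurable_id)))
            fun τ hτ => ?_
          exact mul_le_mul_left
            (hf_mono (Set.mem_Ioi.2 hs2) (Set.mem_Ioi.2 (by linarith [hτ.1])) hτ.1) _
      _ = f (s/2) * ∫⁻ τ in Set.Ico (s/2) s, g (s - τ) :=
          lintegral_const_mul _ (hg_meas.comp (measurable_const.sub measurable_id))
      _ ≤ f (s/2) * ∫⁻ τ in Set.Ioo (0:ℝ) (t/2), g τ := by
          refine mul_le_mul_right ?_ _
          have hpre : Set.Ico (s/2) s = (fun x => s - x) ⁻¹' Set.Ioc 0 (s/2) := by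
            ext x
            simp only [Set.mem_Ico, Set.mem_preimage, Set.mem_Ioc]
            constructor <;> intro h <;> constructor <;> linarith [h.1, h.2]
          have hmp : MeasurePreserving (fun x : ℝ => s - x) volume volume :=
            Measure.measurePreserving_sub_left volume s
          have hemb : MeasurableEmbedding (fun x : ℝ => s - x) :=
            (MeasurableEquiv.subLeft s).measurableEmbedding
          rw [hpre, hmp.setLIntegral_comp_preimage_emb hemb]
          calc ∫⁻ τ in Set.Ioc (0:ℝ) (s/2), g τ
              = ∫⁻ τ in Set.Ioo (0:ℝ) (s/2), g τ := by
                rw [← restrict_Ioo_eq_restrict_Ioc]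
            _ ≤ ∫⁻ τ in Set.Ioo (0:ℝ) (t/2), g τ :=
                lintegral_mono_set (Set.Ioo_subset_Ioo le_rfl (by linarith))
end

section
/- For every β > 0 there exists δ ∈ (0, e^{−3}) such that for every t > 0 there is a constant C = C(β,t) < ∞ with: for all 0 < τ ≤ t, ∫_{|z| ≤ δ/√(2β)} P_τ(z) / (|z|²·K₀(√(2β)|z|)³) dz ≤ C·( 𝟙{τ ≤ δ} / (τ·(log τ)²) + 1 ). -/
open MeasureTheory Set

/-- The two-dimensional heat kernel `P_t(z) = (2πt)⁻¹ e^{-|z|²/(2t)}`. -/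
noncomputable def heatKernel (t : ℝ) (z : EuclideanSpace ℝ (Fin 2)) : ℝ :=
  (2 * Real.pi * t)⁻¹ * Real.exp (-‖z‖ ^ 2 / (2 * t))

/-!
For `x ≤ 1` one has `K₀(x) ≥ log(1/x) / 8`, so in polar coordinates the integral is at most a
constant times `τ⁻¹ ∫₀^R e^{-r²/(2τ)} dr / (r log³(1/(c r)))`, where `c = √(2β)` and
`c R = δ = e^{-4}`. The density `1 / (r log³(1/(c r)))` has the explicit primitive
`1 / (2 log²(1/(c r)))`, which vanishes at `0`. For `τ ≤ δ` split at `q = R τ^{1/4}`: on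
`(0, q]` this primitive gives `O(1 / log² τ)`; on `(q, R]` the Gaussian factor is at most
`8 τ² / r⁴`, and `∫_q^∞ 8 τ² r⁻⁵ dr = 2 τ² / q⁴ = 2 τ / R⁴`. For `τ > δ` the primitive
alone gives `O(1) = O(τ)`.
-/

open Real Filter Topology

lemma exp_neg_le_factorial_div_pow {y : ℝ} (hy : 0 < y) (n : ℕ) :
    exp (-y) ≤ n.factorial / y ^ n := by
  rw [exp_neg, ← inv_div]
  exact inv_anti₀ (by positivity) (pow_div_factorial_le_exp _ hy.le n)

lemma besselK_zero_eq (x : ℝ) :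
    besselK 0 x = (∫ s in Ioi 0, exp (-s - x ^ 2 / (4 * s)) * s⁻¹) / 2 := by
  simp only [besselK, rpow_zero, neg_zero, zero_sub, rpow_neg_one, zero_add, rpow_one]
  ring

lemma besselK_zero_nonneg (x : ℝ) : 0 ≤ besselK 0 x := by
  rw [besselK_zero_eq]
  exact div_nonneg (setIntegral_nonneg measurableSet_Ioi fun s (hs : 0 < s) => by positivity)
    zero_le_two

lemma integrableOn_besselK_zero_integrand {x : ℝ} (hx : x ≠ 0) :
    IntegrableOn (fun s => exp (-s - x ^ 2 / (4 * s)) * s⁻¹) (Ioi 0) := by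
  refine ((exp_neg_integrableOn_Ioi 0 one_pos).const_mul (4 / x ^ 2)).mono'
    (by fun_prop) ?_
  filter_upwards [ae_restrict_mem measurableSet_Ioi] with s (hs : 0 < s)
  have hexp := exp_neg_le_factorial_div_pow (y := x ^ 2 / (4 * s)) (by positivity) 1
  rw [norm_of_nonneg (by positivity), sub_eq_add_neg, exp_add]
  calc exp (-s) * exp (-(x ^ 2 / (4 * s))) * s⁻¹
      ≤ exp (-s) * (1 / (x ^ 2 / (4 * s))) * s⁻¹ := by gcongr; simpa using hexp
    _ = 4 / x ^ 2 * exp (-1 * s) := by field_simp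

-- On `(x, 1]` the integrand is at least `1 / (4 s)`; the rest of the integral is dropped.
lemma neg_log_div_eight_le_besselK_zero {x : ℝ} (h0 : 0 < x) (h1 : x ≤ 1) :
    -log x / 8 ≤ besselK 0 x := by
  set f := fun s => exp (-s - x ^ 2 / (4 * s)) * s⁻¹
  have hexp : (1 / 4 : ℝ) ≤ exp (-5 / 4) := by
    have : (5 / 4 : ℝ) ≤ log 4 := by
      rw [show (4 : ℝ) = 2 ^ 2 by norm_num, log_pow]
      linarith [log_two_gt_d9]
    rw [neg_div, exp_neg, one_div]
    exact inv_anti₀ (exp_pos _) ((exp_le_exp.2 this).trans_eq (exp_log (by norm_num)))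
  have hlow : ∀ s ∈ Ioc x 1, 1 / 4 * s⁻¹ ≤ f s := by
    rintro s ⟨hxs, hs1⟩
    have hs : 0 < s := h0.trans hxs
    have : x ^ 2 / (4 * s) ≤ 1 / 4 := by
      rw [div_le_iff₀ (by positivity)]; nlinarith
    show 1 / 4 * s⁻¹ ≤ exp (-s - x ^ 2 / (4 * s)) * s⁻¹
    gcongr
    exact hexp.trans (exp_le_exp.2 (by linarith))
  have hinv : IntegrableOn (fun s : ℝ => 1 / 4 * s⁻¹) (Ioc x 1) := by
    refine ((intervalIntegral.intervalIntegrable_inv (fun s hs => ?_) continuousOn_id).const_mul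
      _).1
    rw [uIcc_of_le h1] at hs
    exact (h0.trans_le hs.1).ne'
  calc -log x / 8 = (∫ s in Ioc x 1, 1 / 4 * s⁻¹) / 2 := by
        rw [integral_const_mul, ← intervalIntegral.integral_of_le h1,
          integral_inv_of_pos h0 one_pos, one_div x, log_inv]
        ring
    _ ≤ (∫ s in Ioc x 1, f s) / 2 := by
        gcongr ?_ / 2
        exact setIntegral_mono_on hinv
          ((integrableOn_besselK_zero_integrand h0.ne').mono_set
            fun s hs => h0.trans hs.1) measurableSet_Ioc hlow
    _ ≤ (∫ s in Ioi 0, f s) / 2 := by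
        gcongr ?_ / 2
        refine setIntegral_mono_set (integrableOn_besselK_zero_integrand h0.ne') ?_ ?_
        · filter_upwards [ae_restrict_mem measurableSet_Ioi] with s (hs : 0 < s)
          positivity
        · exact Eventually.of_forall fun s hs => h0.trans hs.1
    _ = besselK 0 x := (besselK_zero_eq x).symm

lemma inv_besselK_zero_pow_three_le {x : ℝ} (h0 : 0 < x) (h1 : x < 1) :
    (besselK 0 x ^ 3)⁻¹ ≤ 512 * ((-log x) ^ 3)⁻¹ := by
  have hL : 0 < -log x := neg_pos.2 (log_neg h0 h1)
  calc (besselK 0 x ^ 3)⁻¹ ≤ ((-log x / 8) ^ 3)⁻¹ := by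
        gcongr; exact neg_log_div_eight_le_besselK_zero h0 h1.le
    _ = 512 * ((-log x) ^ 3)⁻¹ := by ring

lemma lintegral_fun_norm_addHaar {E : Type*} [NormedAddCommGroup E] [NormedSpace ℝ E]
    [FiniteDimensional ℝ E] [MeasurableSpace E] [BorelSpace E] [Nontrivial E]
    (μ : Measure E) [μ.IsAddHaarMeasure] (f : ℝ → ENNReal) (hf : Measurable f) :
    ∫⁻ x, f ‖x‖ ∂μ = μ.toSphere univ *
      ∫⁻ r in Ioi 0, ENNReal.ofReal (r ^ (Module.finrank ℝ E - 1)) * f r := by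
  have hf' : Measurable fun x : Metric.sphere (0 : E) 1 × Ioi (0 : ℝ) => f x.2 :=
    hf.comp (measurable_subtype_coe.comp measurable_snd)
  calc ∫⁻ x, f ‖x‖ ∂μ
      = ∫⁻ x : ({0}ᶜ : Set E), f ‖x.1‖ ∂(μ.comap (↑)) := by
        rw [lintegral_subtype_comap (measurableSet_singleton _).compl fun x => f ‖x‖,
          restrict_compl_singleton]
    _ = ∫⁻ x, f x.2 ∂μ.toSphere.prod (.volumeIoiPow (Module.finrank ℝ E - 1)) := by
        simpa using μ.measurePreserving_homeomorphUnitSphereProd.lintegral_comp hf'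
    _ = μ.toSphere univ * ∫⁻ r, f r ∂(.volumeIoiPow (Module.finrank ℝ E - 1)) := by
        rw [lintegral_prod _ hf'.aemeasurable]
        dsimp only
        rw [lintegral_const, mul_comm]
    _ = _ := by
        rw [Measure.volumeIoiPow, lintegral_withDensity_eq_lintegral_mul _ (by fun_prop)
          (show Measurable fun r : Ioi (0 : ℝ) => f r from hf.comp measurable_subtype_coe)]
        exact congrArg _ (lintegral_subtype_comap measurableSet_Ioi
          fun r => ENNReal.ofReal (r ^ (Module.finrank ℝ E - 1)) * f r)

noncomputable def radialProfile (c τ r : ℝ) : ℝ :=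
  exp (-r ^ 2 / (2 * τ)) * (r * (-log (c * r)) ^ 3)⁻¹

lemma heatKernel_div_le_radialProfile {c τ : ℝ} {z : EuclideanSpace ℝ (Fin 2)} (hτ : 0 ≤ τ)
    (hcz : 0 < c * ‖z‖) (hcz1 : c * ‖z‖ < 1) :
    heatKernel τ z / (‖z‖ ^ 2 * besselK 0 (c * ‖z‖) ^ 3) ≤
      512 * (2 * π * τ)⁻¹ * ‖z‖⁻¹ * radialProfile c τ ‖z‖ :=
  calc heatKernel τ z / (‖z‖ ^ 2 * besselK 0 (c * ‖z‖) ^ 3)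
      = (2 * π * τ)⁻¹ * exp (-‖z‖ ^ 2 / (2 * τ)) * (‖z‖ ^ 2)⁻¹ *
          (besselK 0 (c * ‖z‖) ^ 3)⁻¹ := by
        rw [heatKernel, div_eq_mul_inv, mul_inv]; ring
    _ ≤ (2 * π * τ)⁻¹ * exp (-‖z‖ ^ 2 / (2 * τ)) * (‖z‖ ^ 2)⁻¹ *
          (512 * ((-log (c * ‖z‖)) ^ 3)⁻¹) := by
        gcongr; exact inv_besselK_zero_pow_three_le hcz hcz1
    _ = 512 * (2 * π * τ)⁻¹ * ‖z‖⁻¹ * radialProfile c τ ‖z‖ := by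
        rw [radialProfile]; ring

lemma setLIntegral_closedBall_heatKernel_div_le {c R τ : ℝ} (hc : 0 < c) (hτ : 0 ≤ τ)
    (hcR : c * R < 1) :
    ∫⁻ z in Metric.closedBall (0 : EuclideanSpace ℝ (Fin 2)) R,
        ENNReal.ofReal (heatKernel τ z / (‖z‖ ^ 2 * besselK 0 (c * ‖z‖) ^ 3))
      ≤ (volume : Measure (EuclideanSpace ℝ (Fin 2))).toSphere univ *
        ENNReal.ofReal (512 * (2 * π * τ)⁻¹) *
        ∫⁻ r in Ioc 0 R, ENNReal.ofReal (radialProfile c τ r) := by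
  set S := (volume : Measure (EuclideanSpace ℝ (Fin 2))).toSphere univ
  set A := 512 * (2 * π * τ)⁻¹
  set G := (Ioc 0 R).indicator fun r => ENNReal.ofReal (A * r⁻¹ * radialProfile c τ r)
    with hGdef
  have hG : Measurable G :=
    Measurable.indicator (by unfold radialProfile; fun_prop) measurableSet_Ioc
  have hpointwise : ∀ z ∈ Metric.closedBall (0 : EuclideanSpace ℝ (Fin 2)) R,
      ENNReal.ofReal (heatKernel τ z / (‖z‖ ^ 2 * besselK 0 (c * ‖z‖) ^ 3)) ≤
        G ‖z‖ := by
    intro z hz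
    rcases eq_or_ne z 0 with rfl | hz0
    · simp
    have hr : 0 < ‖z‖ := norm_pos_iff.2 hz0
    have hrR : ‖z‖ ≤ R := by simpa using hz
    rw [hGdef, indicator_of_mem (show ‖z‖ ∈ Ioc 0 R from ⟨hr, hrR⟩)]
    exact ENNReal.ofReal_le_ofReal (heatKernel_div_le_radialProfile hτ (by positivity)
      ((mul_le_mul_of_nonneg_left hrR hc.le).trans_lt hcR))
  calc _ ≤ ∫⁻ z in Metric.closedBall (0 : EuclideanSpace ℝ (Fin 2)) R, G ‖z‖ :=
        setLIntegral_mono' measurableSet_closedBall hpointwise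
    _ ≤ ∫⁻ z, G ‖z‖ := setLIntegral_le_lintegral _ _
    _ = S * ∫⁻ r in Ioi 0, ENNReal.ofReal r * G r := by
        rw [lintegral_fun_norm_addHaar _ _ hG, finrank_euclideanSpace_fin,
          Nat.add_one_sub_one]
        simp only [pow_one, S]
    _ = S * ∫⁻ r in Ioi 0, (Ioc 0 R).indicator
          (fun r => ENNReal.ofReal A * ENNReal.ofReal (radialProfile c τ r)) r := by
        refine congrArg _ (setLIntegral_congr_fun measurableSet_Ioi fun r (hr : 0 < r) => ?_)
        by_cases hrR : r ∈ Ioc 0 R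
        · rw [hGdef, indicator_of_mem hrR, indicator_of_mem hrR, ← ENNReal.ofReal_mul hr.le,
            ← ENNReal.ofReal_mul (by positivity)]
          congr 1
          field_simp
        · rw [hGdef, indicator_of_notMem hrR, indicator_of_notMem hrR, mul_zero]
    _ = S * ∫⁻ r in Ioc 0 R, ENNReal.ofReal A * ENNReal.ofReal (radialProfile c τ r) := by
        rw [setLIntegral_indicator measurableSet_Ioc, inter_eq_left.2 Ioc_subset_Ioi_self]
    _ = _ := by rw [lintegral_const_mul' _ _ ENNReal.ofReal_ne_top, mul_assoc]

lemma hasDerivAt_inv_two_mul_log_sq {c r : ℝ} (hc : c ≠ 0) (hr : r ≠ 0)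
    (hL : log (c * r) ≠ 0) :
    HasDerivAt (fun r => (2 * log (c * r) ^ 2)⁻¹) ((r * (-log (c * r)) ^ 3)⁻¹) r := by
  have hlog : HasDerivAt (fun r => log (c * r)) r⁻¹ r := by
    convert ((hasDerivAt_id' r).const_mul c).log (mul_ne_zero hc hr) using 1
    field_simp
  refine (((hlog.fun_pow 2).const_mul 2).fun_inv
    (mul_ne_zero two_ne_zero (pow_ne_zero 2 hL))).congr_deriv ?_
  field_simp
  ring

lemma tendsto_inv_two_mul_log_sq {c : ℝ} (hc : 0 < c) :
    Tendsto (fun r => (2 * log (c * r) ^ 2)⁻¹) (𝓝[>] 0) (𝓝 0) := by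
  have hcr : Tendsto (fun r => c * r) (𝓝[>] 0) (𝓝[>] 0) := by
    refine tendsto_nhdsWithin_iff.2
      ⟨?_, eventually_nhdsWithin_of_forall fun r hr => mul_pos hc hr⟩
    simpa using (tendsto_id.const_mul c).mono_left (nhdsWithin_le_nhds (a := (0 : ℝ)))
  have hL : Tendsto (fun r => -log (c * r)) (𝓝[>] 0) atTop :=
    tendsto_neg_atBot_atTop.comp (tendsto_log_nhdsGT_zero.comp hcr)
  convert (((tendsto_pow_atTop two_ne_zero).comp hL).const_mul_atTop two_pos).inv_tendsto_atTop
    using 1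
  ext r
  simp

lemma lintegral_Ioc_inv_mul_neg_log_pow_three {c q : ℝ} (hc : 0 < c) (hq : 0 < q)
    (hcq : c * q < 1) :
    ∫⁻ r in Ioc 0 q, ENNReal.ofReal ((r * (-log (c * r)) ^ 3)⁻¹) =
      ENNReal.ofReal ((2 * log (c * q) ^ 2)⁻¹) := by
  set H := fun r => (2 * log (c * r) ^ 2)⁻¹
  have hlog : ∀ r ∈ Ioc 0 q, log (c * r) < 0 := fun r hr =>
    log_neg (mul_pos hc hr.1) ((mul_le_mul_of_nonneg_left hr.2 hc.le).trans_lt hcq)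
  have hderiv : ∀ r ∈ Ioo 0 q, HasDerivAt H ((r * (-log (c * r)) ^ 3)⁻¹) r := fun r hr =>
    hasDerivAt_inv_two_mul_log_sq hc.ne' hr.1.ne' (hlog r (Ioo_subset_Ioc_self hr)).ne
  have hnonneg : ∀ r ∈ Ioc 0 q, 0 ≤ (r * (-log (c * r)) ^ 3)⁻¹ := fun r hr => by
    have := neg_pos.2 (hlog r hr); have := hr.1; positivity
  have hcont : ContinuousOn H (Icc 0 q) := by
    intro r hr
    rcases hr.1.eq_or_lt with rfl | hr0
    · have hH0 : H 0 = 0 := by simp [H]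
      refine (continuousWithinAt_Ioi_iff_Ici.1 ?_).mono Icc_subset_Ici_self
      rw [ContinuousWithinAt, hH0]
      exact tendsto_inv_two_mul_log_sq hc
    · exact (hasDerivAt_inv_two_mul_log_sq hc.ne' hr0.ne'
        (hlog r ⟨hr0, hr.2⟩).ne).continuousAt.continuousWithinAt
  have hint := intervalIntegral.integrableOn_deriv_of_nonneg hcont hderiv
    fun r hr => hnonneg r (Ioo_subset_Ioc_self hr)
  rw [← ofReal_integral_eq_lintegral_ofReal hint (ae_restrict_of_forall_mem measurableSet_Ioc
    hnonneg), ← intervalIntegral.integral_of_le hq.le,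
    intervalIntegral.integral_eq_sub_of_hasDerivAt_of_le hq.le hcont hderiv
      ((intervalIntegrable_iff_integrableOn_Ioc_of_le hq.le).2 hint)]
  simp [H]

lemma lintegral_Ioi_exp_neg_sq_div_mul_inv_le {q τ : ℝ} (hq : 0 < q) (hτ : 0 < τ) :
    ∫⁻ r in Ioi q, ENNReal.ofReal (exp (-r ^ 2 / (2 * τ)) * r⁻¹) ≤
      ENNReal.ofReal (2 * τ ^ 2 / q ^ 4) := by
  have hint : IntegrableOn (fun r : ℝ => 8 * τ ^ 2 * r ^ (-5 : ℝ)) (Ioi q) :=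
    (integrableOn_Ioi_rpow_of_lt (by norm_num) hq).const_mul _
  calc _ ≤ ∫⁻ r in Ioi q, ENNReal.ofReal (8 * τ ^ 2 * r ^ (-5 : ℝ)) := by
        refine setLIntegral_mono' measurableSet_Ioi fun r (hr : q < r) =>
          ENNReal.ofReal_le_ofReal ?_
        have hr0 : 0 < r := hq.trans hr
        have hexp := exp_neg_le_factorial_div_pow (y := r ^ 2 / (2 * τ)) (by positivity) 2
        calc exp (-r ^ 2 / (2 * τ)) * r⁻¹ ≤ 2 / (r ^ 2 / (2 * τ)) ^ 2 * r⁻¹ := by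
              rw [neg_div]; gcongr; simpa using hexp
          _ = 8 * τ ^ 2 * r ^ (-5 : ℝ) := by
              rw [rpow_neg hr0.le, show (5 : ℝ) = (5 : ℕ) by norm_num, rpow_natCast]
              field_simp
              ring
    _ = ENNReal.ofReal (∫ r in Ioi q, 8 * τ ^ 2 * r ^ (-5 : ℝ)) :=
        (ofReal_integral_eq_lintegral_ofReal hint (ae_restrict_of_forall_mem measurableSet_Ioi
          fun r (hr : q < r) => by have := hq.trans hr; positivity)).symm
    _ = _ := by
        rw [integral_const_mul, integral_Ioi_rpow_of_lt (by norm_num) hq,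
          show (-5 : ℝ) + 1 = -(4 : ℕ) by norm_num, rpow_neg hq.le, rpow_natCast]
        congr 1
        field_simp
        ring

lemma lintegral_radialProfile_le_inv_two_mul_log_sq {c p τ : ℝ} (hc : 0 < c) (hp : 0 < p)
    (hcp : c * p < 1) (hτ : 0 ≤ τ) :
    ∫⁻ r in Ioc 0 p, ENNReal.ofReal (radialProfile c τ r) ≤
      ENNReal.ofReal ((2 * log (c * p) ^ 2)⁻¹) := by
  rw [← lintegral_Ioc_inv_mul_neg_log_pow_three hc hp hcp]
  refine setLIntegral_mono' measurableSet_Ioc fun r hr => ENNReal.ofReal_le_ofReal ?_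
  have hL : 0 < -log (c * r) :=
    neg_pos.2 (log_neg (mul_pos hc hr.1) ((mul_le_mul_of_nonneg_left hr.2 hc.le).trans_lt hcp))
  have := hr.1
  refine mul_le_of_le_one_left (by positivity) (exp_le_one_iff.2 ?_)
  exact div_nonpos_of_nonpos_of_nonneg (neg_nonpos.2 (sq_nonneg r)) (by positivity)

lemma lintegral_radialProfile_le_add {c q R τ : ℝ} (hc : 0 < c) (hq : 0 < q) (hqR : q ≤ R)
    (hcR : c * R ≤ exp (-1)) (hτ : 0 < τ) :
    ∫⁻ r in Ioc 0 R, ENNReal.ofReal (radialProfile c τ r) ≤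
      ENNReal.ofReal ((2 * log (c * q) ^ 2)⁻¹) + ENNReal.ofReal (2 * τ ^ 2 / q ^ 4) := by
  have hcq : c * q < 1 := (mul_le_mul_of_nonneg_left hqR hc.le).trans_lt
    (hcR.trans_lt (exp_lt_one_iff.2 (by norm_num)))
  rw [← Ioc_union_Ioc_eq_Ioc hq.le hqR,
    lintegral_union measurableSet_Ioc (Ioc_disjoint_Ioc_of_le le_rfl)]
  gcongr ?_ + ?_
  · exact lintegral_radialProfile_le_inv_two_mul_log_sq hc hq hcq hτ.le
  calc _ ≤ ∫⁻ r in Ioc q R, ENNReal.ofReal (exp (-r ^ 2 / (2 * τ)) * r⁻¹) := by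
        refine setLIntegral_mono' measurableSet_Ioc fun r hr => ENNReal.ofReal_le_ofReal ?_
        have hr0 : 0 < r := hq.trans hr.1
        have hL : 1 ≤ -log (c * r) := by
          have := log_le_log (mul_pos hc hr0) ((mul_le_mul_of_nonneg_left hr.2 hc.le).trans hcR)
          rw [log_exp] at this
          linarith
        refine mul_le_mul_of_nonneg_left (inv_anti₀ hr0 ?_) (exp_pos _).le
        exact le_mul_of_one_le_right hr0.le (one_le_pow₀ hL)
    _ ≤ ∫⁻ r in Ioi q, ENNReal.ofReal (exp (-r ^ 2 / (2 * τ)) * r⁻¹) :=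
        lintegral_mono_set Ioc_subset_Ioi_self
    _ ≤ _ := lintegral_Ioi_exp_neg_sq_div_mul_inv_le hq hτ

lemma lintegral_radialProfile_le_of_lt_one {c R τ : ℝ} (hc : 0 < c) (hR : 0 < R)
    (hcR : c * R ≤ exp (-1)) (hτ : 0 < τ) (hτ1 : τ < 1) :
    ∫⁻ r in Ioc 0 R, ENNReal.ofReal (radialProfile c τ r) ≤
      ENNReal.ofReal (8 * (log τ ^ 2)⁻¹ + 2 * τ / R ^ 4) := by
  set σ := τ ^ (1 / 4 : ℝ)
  have hσ : 0 < σ := rpow_pos_of_pos hτ _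
  have hσ4 : σ ^ 4 = τ := by
    rw [← rpow_natCast, ← rpow_mul hτ.le]; norm_num
  have hlogτ : log τ ≠ 0 := (log_neg hτ hτ1).ne
  have hlog : log (c * (R * σ)) ≤ log τ / 4 := by
    have := log_le_log (mul_pos hc hR) hcR
    rw [log_exp] at this
    rw [← mul_assoc, log_mul (by positivity) hσ.ne', log_rpow hτ]
    linarith
  have hsq : (log τ / 4) ^ 2 ≤ log (c * (R * σ)) ^ 2 := by nlinarith [log_neg hτ hτ1]
  refine (lintegral_radialProfile_le_add hc (mul_pos hR hσ) ?_ hcR hτ).trans ?_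
  · exact mul_le_of_le_one_right hR.le (rpow_le_one hτ.le hτ1.le (by norm_num))
  rw [← ENNReal.ofReal_add (by positivity) (by positivity)]
  refine ENNReal.ofReal_le_ofReal (add_le_add ?_ (le_of_eq ?_))
  · calc (2 * log (c * (R * σ)) ^ 2)⁻¹ ≤ (2 * (log τ / 4) ^ 2)⁻¹ := by gcongr
      _ = 8 * (log τ ^ 2)⁻¹ := by ring
  · rw [mul_pow, hσ4]
    field_simp

lemma lintegral_radialProfile_le {c τ : ℝ} (hc : 0 < c) (hτ : 0 < τ) :
    ∫⁻ r in Ioc 0 (exp (-4) / c), ENNReal.ofReal (radialProfile c τ r) ≤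
      ENNReal.ofReal (τ * (8 + 2 / (exp (-4) / c) ^ 4 + exp 4 / 32) *
        ((if τ ≤ exp (-4) then (τ * log τ ^ 2)⁻¹ else 0) + 1)) := by
  have hR : 0 < exp (-4) / c := by positivity
  have hcR : c * (exp (-4) / c) = exp (-4) := mul_div_cancel₀ _ hc.ne'
  have hR4 : 0 ≤ 2 / (exp (-4) / c) ^ 4 := by positivity
  split_ifs with hτδ
  · have hτ1 : τ < 1 := hτδ.trans_lt (exp_lt_one_iff.2 (by norm_num))
    refine (lintegral_radialProfile_le_of_lt_one hc hR
      (hcR.trans_le (exp_le_exp.2 (by norm_num))) hτ hτ1).trans (ENNReal.ofReal_le_ofReal ?_)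
    have hX : 0 ≤ (τ * log τ ^ 2)⁻¹ := by positivity
    have hlogτ : log τ ≠ 0 := (log_neg hτ hτ1).ne
    have h8 : 8 * (log τ ^ 2)⁻¹ = τ * 8 * (τ * log τ ^ 2)⁻¹ := by field_simp
    have h2 : 2 * τ / (exp (-4) / c) ^ 4 = τ * (2 / (exp (-4) / c) ^ 4) := by ring
    rw [h8, h2]
    nlinarith [exp_pos 4, mul_nonneg hτ.le hX]
  · refine (lintegral_radialProfile_le_inv_two_mul_log_sq hc hR (hcR.trans_lt
      (exp_lt_one_iff.2 (by norm_num))) hτ.le).trans (ENNReal.ofReal_le_ofReal ?_)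
    have hτe : 1 < τ * exp 4 := by
      have := mul_lt_mul_of_pos_right (not_le.1 hτδ) (exp_pos 4)
      rwa [← exp_add, neg_add_cancel, exp_zero] at this
    rw [hcR, log_exp]
    norm_num
    nlinarith

/-- For every `β > 0` there is `δ ∈ (0, e^{-3})` such that for every `t > 0` there is a
constant `C = C(β,t)` with
`∫_{|z| ≤ δ/√(2β)} P_τ(z) / (|z|² K₀(√(2β)|z|)³) dz ≤ C (𝟙{τ ≤ δ}/(τ (log τ)²) + 1)`
for all `0 < τ ≤ t`. -/
theorem stmt13 (β : ℝ) (hβ : 0 < β) :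
    ∃ δ : ℝ, 0 < δ ∧ δ < Real.exp (-3) ∧
      ∀ t : ℝ, 0 < t → ∃ C : ℝ, ∀ τ : ℝ, 0 < τ → τ ≤ t →
        ∫ z in Metric.closedBall (0 : EuclideanSpace ℝ (Fin 2)) (δ / Real.sqrt (2 * β)),
            heatKernel τ z / (‖z‖ ^ 2 * (besselK 0 (Real.sqrt (2 * β) * ‖z‖)) ^ 3)
          ≤ C * ((if τ ≤ δ then (τ * (Real.log τ) ^ 2)⁻¹ else 0) + 1) := by
  have hc : 0 < Real.sqrt (2 * β) := Real.sqrt_pos.2 (by positivity)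
  set c := Real.sqrt (2 * β)
  set S := (volume : Measure (EuclideanSpace ℝ (Fin 2))).toSphere univ
  set B := 8 + 2 / (exp (-4) / c) ^ 4 + exp 4 / 32
  refine ⟨exp (-4), exp_pos _, exp_lt_exp.2 (by norm_num), fun t _ =>
    ⟨S.toReal * (256 / π) * B, fun τ hτ _ => ?_⟩⟩
  have hcR : c * (exp (-4) / c) < 1 := by
    rw [mul_div_cancel₀ _ hc.ne']; exact exp_lt_one_iff.2 (by norm_num)
  set F := fun z : EuclideanSpace ℝ (Fin 2) =>
    heatKernel τ z / (‖z‖ ^ 2 * besselK 0 (c * ‖z‖) ^ 3)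
  have hF : ∀ z, 0 ≤ F z := fun z => by
    have := besselK_zero_nonneg (c * ‖z‖)
    unfold F heatKernel
    positivity
  calc _ ≤ (∫⁻ z in Metric.closedBall 0 (exp (-4) / c), ENNReal.ofReal (F z)).toReal := by
        refine (Real.le_norm_self _).trans ((norm_integral_le_lintegral_norm _).trans_eq ?_)
        exact congrArg _ (lintegral_congr fun z => congrArg _ (norm_of_nonneg (hF z)))
    _ ≤ (S * ENNReal.ofReal (512 * (2 * π * τ)⁻¹) * ENNReal.ofReal
          (τ * B * ((if τ ≤ exp (-4) then (τ * log τ ^ 2)⁻¹ else 0) + 1))).toReal := by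
        refine ENNReal.toReal_mono (by finiteness)
          ((setLIntegral_closedBall_heatKernel_div_le hc hτ.le hcR).trans ?_)
        gcongr
        exact lintegral_radialProfile_le hc hτ
    _ = _ := by
        rw [ENNReal.toReal_mul, ENNReal.toReal_mul, ENNReal.toReal_ofReal (by positivity),
          ENNReal.toReal_ofReal (by positivity)]
        field_simp
        ring
end

section
/- For all β > 0 and t > 0, lim_{x → 0⁺} ( ∫₀^t e^{−βs}·(4πs)^{−1}·e^{−x²/(2s)} ds ) / log(1/x) = 1/(2π). Equivalently, ∫₀^t e^{−βs} P_{2s}(√2·z) ds ∼ log(|z|^{−1})/(2π) as z → 0 in ℝ² ∖ {0}. -/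
open MeasureTheory Set Filter Topology Real intervalIntegral

/-!
Split the integral at `s = x²`. Since `e^{-y} ≤ 1/y`, the integrand is at most `(2πx²)⁻¹` on
`(0, x²]`, which contributes at most `1/(2π)`; on `[x², t]` it is at most `(4πs)⁻¹`, which
contributes `(log t + 2 log(1/x)) / (4π)`. For the lower bound, put `L = log(1/x)` and integrate
only over `[x² L, 1/L]`: there `e^{-βs} e^{-x²/(2s)} ≥ e^{-(β + 1/2)/L}`, while
`∫ (4πs)⁻¹ ds = (L - log L) / (2π)` over that range. Both bounds are `L/(2π) + o(L)` as
`L → ∞`, so the limit is taken along `x = e^{-L}`.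
-/

lemma Real.exp_neg_le_inv {y : ℝ} (hy : 0 < y) : exp (-y) ≤ y⁻¹ := by
  rw [exp_neg]
  exact inv_anti₀ hy (by linarith [add_one_le_exp y])

lemma integral_inv_four_pi_mul {a b : ℝ} (ha : 0 < a) (hb : 0 < b) :
    ∫ s in a..b, (4 * π * s)⁻¹ = (log b - log a) / (4 * π) := by
  simp only [mul_inv, intervalIntegral.integral_const_mul, integral_inv_of_pos ha hb,
    log_div hb.ne' ha.ne']
  ring

lemma intervalIntegrable_inv_four_pi_mul {a b : ℝ} (ha : 0 < a) (hb : 0 < b) :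
    IntervalIntegrable (fun s => (4 * π * s)⁻¹) volume a b := by
  simp only [mul_inv]
  exact (intervalIntegrable_inv_iff.2 (Or.inr (notMem_uIcc_of_lt ha hb))).const_mul _

lemma tendsto_add_mul_div_self (c d : ℝ) :
    Tendsto (fun l : ℝ => (c + d * l) / l) atTop (𝓝 d) := by
  have h := (tendsto_inv_atTop_zero.const_mul c).add_const d
  rw [mul_zero, zero_add] at h
  refine h.congr' ?_
  filter_upwards [eventually_ne_atTop 0] with l hl
  field_simp

lemma tendsto_exp_neg_div_mul_sub_log_div_self (c : ℝ) :
    Tendsto (fun l : ℝ => exp (-c / l) * (l - log l) / l) atTop (𝓝 1) := by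
  have hexp : Tendsto (fun l : ℝ => exp (-c / l)) atTop (𝓝 1) := by
    simpa using ((tendsto_const_nhds (x := -c)).div_atTop tendsto_id).rexp
  have hlog : Tendsto (fun l : ℝ => 1 - log l / l) atTop (𝓝 1) := by
    simpa using (Real.isLittleO_log_id_atTop.tendsto_div_nhds_zero).const_sub 1
  rw [← mul_one 1]
  refine (hexp.mul hlog).congr' ?_
  filter_upwards [eventually_ne_atTop 0] with l hl
  field_simp

noncomputable def resolventIntegrand (β x s : ℝ) : ℝ :=
  exp (-β * s) * (4 * π * s)⁻¹ * exp (-x ^ 2 / (2 * s))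

section

variable {β x s a b t : ℝ}

lemma resolventIntegrand_nonneg (hs : 0 ≤ s) : 0 ≤ resolventIntegrand β x s := by
  unfold resolventIntegrand
  positivity

lemma resolventIntegrand_le (hβ : 0 ≤ β) (hs : 0 < s) :
    resolventIntegrand β x s ≤ (4 * π * s)⁻¹ * exp (-x ^ 2 / (2 * s)) := by
  rw [resolventIntegrand, mul_assoc]
  exact mul_le_of_le_one_left (by positivity) (exp_le_one_iff.2 (by nlinarith))

lemma resolventIntegrand_le_inv (hβ : 0 ≤ β) (hs : 0 < s) :
    resolventIntegrand β x s ≤ (4 * π * s)⁻¹ := by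
  refine (resolventIntegrand_le hβ hs).trans (mul_le_of_le_one_right (by positivity) ?_)
  exact exp_le_one_iff.2 (by rw [neg_div, neg_nonpos]; positivity)

lemma resolventIntegrand_le_inv_sq (hβ : 0 ≤ β) (hx : x ≠ 0) (hs : 0 < s) :
    resolventIntegrand β x s ≤ (2 * π * x ^ 2)⁻¹ :=
  calc resolventIntegrand β x s ≤ (4 * π * s)⁻¹ * exp (-(x ^ 2 / (2 * s))) := by
        rw [← neg_div]; exact resolventIntegrand_le hβ hs
    _ ≤ (4 * π * s)⁻¹ * (x ^ 2 / (2 * s))⁻¹ := by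
        gcongr; exact exp_neg_le_inv (by positivity)
    _ = (2 * π * x ^ 2)⁻¹ := by field_simp; ring

lemma exp_mul_exp_mul_inv_le_resolventIntegrand (hβ : 0 ≤ β) (ha : 0 < a) (has : a ≤ s)
    (hsb : s ≤ b) :
    exp (-β * b) * exp (-x ^ 2 / (2 * a)) * (4 * π * s)⁻¹ ≤ resolventIntegrand β x s := by
  have hs : 0 < s := ha.trans_le has
  have hβs : exp (-β * b) ≤ exp (-β * s) := exp_le_exp.2 (by nlinarith)
  have hxs : exp (-x ^ 2 / (2 * a)) ≤ exp (-x ^ 2 / (2 * s)) :=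
    exp_le_exp.2 (by rw [neg_div, neg_div, neg_le_neg_iff]; gcongr)
  rw [resolventIntegrand, mul_right_comm]
  gcongr

lemma intervalIntegrable_resolventIntegrand (hβ : 0 ≤ β) (hx : x ≠ 0) (ha : 0 ≤ a)
    (hab : a ≤ b) : IntervalIntegrable (resolventIntegrand β x) volume a b := by
  refine (intervalIntegrable_const (c := (2 * π * x ^ 2)⁻¹)).mono_fun
    (by unfold resolventIntegrand; fun_prop) ?_
  rw [uIoc_of_le hab]
  filter_upwards [ae_restrict_mem measurableSet_Ioc] with s hs
  have hs0 : 0 < s := ha.trans_lt hs.1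
  rw [norm_of_nonneg (resolventIntegrand_nonneg hs0.le), norm_of_nonneg (by positivity)]
  exact resolventIntegrand_le_inv_sq hβ hx hs0

lemma integral_resolventIntegrand_le (hβ : 0 ≤ β) (hx : x ≠ 0) (hxt : x ^ 2 ≤ t) :
    ∫ s in 0..t, resolventIntegrand β x s ≤
      1 / (2 * π) + (log t - log (x ^ 2)) / (4 * π) := by
  have hx2 : 0 < x ^ 2 := by positivity
  rw [← integral_add_adjacent_intervals
    (intervalIntegrable_resolventIntegrand hβ hx le_rfl hx2.le)
    (intervalIntegrable_resolventIntegrand hβ hx hx2.le hxt)]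
  gcongr
  · calc ∫ s in 0..x ^ 2, resolventIntegrand β x s
          ≤ ∫ _ in 0..x ^ 2, (2 * π * x ^ 2)⁻¹ :=
          integral_mono_on_of_le_Ioo hx2.le
            (intervalIntegrable_resolventIntegrand hβ hx le_rfl hx2.le) intervalIntegrable_const
            fun s hs => resolventIntegrand_le_inv_sq hβ hx hs.1
      _ = 1 / (2 * π) := by
          rw [intervalIntegral.integral_const, smul_eq_mul]; field_simp; ring
  · calc ∫ s in x ^ 2..t, resolventIntegrand β x s
          ≤ ∫ s in x ^ 2..t, (4 * π * s)⁻¹ :=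
          integral_mono_on_of_le_Ioo hxt (intervalIntegrable_resolventIntegrand hβ hx hx2.le hxt)
            (intervalIntegrable_inv_four_pi_mul hx2 (hx2.trans_le hxt))
            fun s hs => resolventIntegrand_le_inv hβ (hx2.trans hs.1)
      _ = (log t - log (x ^ 2)) / (4 * π) := integral_inv_four_pi_mul hx2 (hx2.trans_le hxt)

lemma le_integral_resolventIntegrand (hβ : 0 ≤ β) (hx : x ≠ 0) (ha : 0 < a) (hab : a ≤ b)
    (hbt : b ≤ t) :
    exp (-β * b) * exp (-x ^ 2 / (2 * a)) * ((log b - log a) / (4 * π)) ≤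
      ∫ s in 0..t, resolventIntegrand β x s :=
  calc _ = ∫ s in a..b, exp (-β * b) * exp (-x ^ 2 / (2 * a)) * (4 * π * s)⁻¹ := by
        rw [intervalIntegral.integral_const_mul, integral_inv_four_pi_mul ha (ha.trans_le hab)]
    _ ≤ ∫ s in a..b, resolventIntegrand β x s :=
        integral_mono_on hab
          ((intervalIntegrable_inv_four_pi_mul ha (ha.trans_le hab)).const_mul _)
          (intervalIntegrable_resolventIntegrand hβ hx ha.le hab)
          fun s hs => exp_mul_exp_mul_inv_le_resolventIntegrand hβ ha hs.1 hs.2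
    _ ≤ ∫ s in 0..t, resolventIntegrand β x s :=
        integral_mono_interval ha.le hab hbt
          (ae_restrict_of_forall_mem measurableSet_Ioc fun _ hs =>
            resolventIntegrand_nonneg hs.1.le)
          (intervalIntegrable_resolventIntegrand hβ hx le_rfl (ha.le.trans (hab.trans hbt)))

variable {l : ℝ}

lemma integral_resolventIntegrand_exp_neg_le (hβ : 0 ≤ β) (ht : 0 < t) (hl : 0 < l)
    (hlt : t⁻¹ ≤ l) :
    ∫ s in 0..t, resolventIntegrand β (exp (-l)) s ≤
      (1 / (2 * π) + log t / (4 * π)) + 1 / (2 * π) * l := by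
  have hxt : exp (-l) ^ 2 ≤ t :=
    calc exp (-l) ^ 2 ≤ exp (-l) :=
          pow_le_of_le_one (exp_pos _).le (exp_le_one_iff.2 (by linarith)) two_ne_zero
      _ ≤ l⁻¹ := exp_neg_le_inv hl
      _ ≤ t := inv_le_of_inv_le₀ ht hlt
  convert integral_resolventIntegrand_le hβ (exp_pos (-l)).ne' hxt using 1
  rw [log_pow, log_exp]
  push_cast
  field_simp
  ring

lemma le_integral_resolventIntegrand_exp_neg (hβ : 0 ≤ β) (ht : 0 < t) (hl : 0 < l)
    (hlt : t⁻¹ ≤ l) :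
    exp (-(β + 1 / 2) / l) * (l - log l) / (2 * π) ≤
      ∫ s in 0..t, resolventIntegrand β (exp (-l)) s := by
  have hab : l * exp (-l) ^ 2 ≤ l⁻¹ :=
    calc l * exp (-l) ^ 2 ≤ l * l⁻¹ ^ 2 := by gcongr; exact exp_neg_le_inv hl
      _ = l⁻¹ := by field_simp
  convert le_integral_resolventIntegrand hβ (exp_pos (-l)).ne' (by positivity) hab
    (inv_le_of_inv_le₀ ht hlt) using 1
  have hexp : exp (-β * l⁻¹) * exp (-exp (-l) ^ 2 / (2 * (l * exp (-l) ^ 2))) =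
      exp (-(β + 1 / 2) / l) := by
    rw [← exp_add]
    congr 1
    field_simp
    ring
  rw [hexp, log_inv, log_mul hl.ne' (by positivity), log_pow, log_exp]
  push_cast
  field_simp
  ring

end

/-- `∫₀^t e^{-βs} (4πs)⁻¹ e^{-x²/(2s)} ds ∼ (log x⁻¹)/(2π)` as `x → 0⁺`. -/
theorem stmt16 (β t : ℝ) (hβ : 0 < β) (ht : 0 < t) :
    Tendsto
      (fun x : ℝ =>
        (∫ s in Set.Ioo (0 : ℝ) t,
            Real.exp (-β * s) * (4 * Real.pi * s)⁻¹ * Real.exp (-x ^ 2 / (2 * s))) /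
          Real.log (1 / x))
      (nhdsWithin 0 (Set.Ioi 0)) (nhds (1 / (2 * Real.pi))) := by
  change Tendsto (fun x => (∫ s in Ioo 0 t, resolventIntegrand β x s) / log (1 / x)) _ _
  rw [← tendsto_comp_exp_atBot, ← tendsto_comp_neg_atTop_iff]
  have hlog (l : ℝ) : log (1 / exp (-l)) = l := by rw [one_div, ← exp_neg, neg_neg, log_exp]
  simp only [hlog, ← integral_Ioc_eq_integral_Ioo, ← intervalIntegral.integral_of_le ht.le]
  refine tendsto_of_tendsto_of_tendsto_of_le_of_le'
    ((tendsto_exp_neg_div_mul_sub_log_div_self (β + 1 / 2)).div_const (2 * π))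
    (tendsto_add_mul_div_self (1 / (2 * π) + log t / (4 * π)) _) ?_ ?_ <;>
    filter_upwards [eventually_gt_atTop 0, eventually_ge_atTop t⁻¹] with l hl hlt
  · rw [div_right_comm]
    exact div_le_div_of_nonneg_right (le_integral_resolventIntegrand_exp_neg hβ.le ht hl hlt) hl.le
  · exact div_le_div_of_nonneg_right
      (integral_resolventIntegrand_exp_neg_le hβ.le ht hl hlt) hl.le
end

section
/- Fix β > 0. For every bounded continuous function f : ℂ → ℂ and every z⁰ ∈ ℂ: (i) the map t ↦ ∫_ℂ P_t(z⁰ − z)·( K̂₁(√(2β)|z|) / z̄ )·f(z) dz is well defined (the integrand is absolutely integrable) and continuous on (0,∞); and (ii) there exists a constant C = C(β) < ∞ such that | ∫_ℂ P_t(z)·( K̂₁(√(2β)|z|) / z̄ )·f(z) dz | ≤ C·(sup_ℂ |f|)·t^{−1/2} for all t > 0. -/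
open MeasureTheory Set

/-- `K̂₁(x) = x K₁(x)`. -/
noncomputable def besselKhat1 (x : ℝ) : ℝ := x * besselK 1 x

/-- The two-dimensional heat kernel on `ℂ`: `P_t(z) = (2πt)⁻¹ e^{-|z|²/(2t)}`. -/
noncomputable def heatKernelC (t : ℝ) (z : ℂ) : ℝ :=
  (2 * Real.pi * t)⁻¹ * Real.exp (-‖z‖ ^ 2 / (2 * t))

/-!
Since `K̂₁(x) = (x²/4) ∫₀^∞ e^{-s - x²/(4s)} s⁻² ds`, dropping `e^{-s}` and substituting
`s ↦ 1/s` gives `0 ≤ K̂₁ ≤ 1`, so the integrand is bounded by `M P_t(z⁰ - z) / |z|`. In polar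
coordinates the factor `r` of the area element cancels `1/|z|`, so `P_t(z) / |z|` is integrable
with `∫ P_t(z) / |z| dz = √(π / (2t))`, which is the `t^{-1/2}` bound. For `t ∈ [τ, T]` the
Gaussian comparison `P_t(z⁰ - z) ≤ (2T/τ) e^{|z⁰|²/(2τ)} P_{2T}(z)` gives a dominating function
independent of `t`, hence integrability and, by dominated convergence, continuity in `t`.
-/

open Real ComplexConjugate

lemma besselKhat1_eq_integral (x : ℝ) :
    besselKhat1 x = x ^ 2 / 4 * ∫ s in Ioi (0 : ℝ), exp (-s - x ^ 2 / (4 * s)) * s ^ (-2 : ℝ) := by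
  rw [besselKhat1, besselK, rpow_one, show (1 : ℝ) + 1 = 2 by norm_num, rpow_two,
    show -(1 : ℝ) - 1 = -2 by norm_num]
  ring

lemma integrableOn_rpow_neg_two_mul_exp_neg_mul_inv {a : ℝ} (ha : 0 < a) :
    IntegrableOn (fun s : ℝ => s ^ (-2 : ℝ) * exp (-a * s⁻¹)) (Ioi 0) := by
  have h := (integrableOn_Ioi_comp_rpow_iff (fun y : ℝ => exp (-a * y)) (p := -1)
    (by norm_num)).2 (by simpa using integrableOn_exp_mul_Ioi (neg_neg_of_pos ha) 0)
  refine h.congr_fun (fun s hs => ?_) measurableSet_Ioi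
  norm_num [rpow_neg_one]

lemma integral_rpow_neg_two_mul_exp_neg_mul_inv {a : ℝ} (ha : 0 < a) :
    ∫ s in Ioi (0 : ℝ), s ^ (-2 : ℝ) * exp (-a * s⁻¹) = a⁻¹ := by
  have h := integral_comp_rpow_Ioi (fun y : ℝ => exp (-a * y)) (p := -1) (by norm_num)
  rw [integral_exp_mul_Ioi (neg_neg_of_pos ha), mul_zero, exp_zero, neg_div_neg_eq, one_div] at h
  rw [← h]
  refine setIntegral_congr_fun measurableSet_Ioi fun s hs => ?_
  norm_num [rpow_neg_one]

lemma besselKhat1_nonneg (x : ℝ) : 0 ≤ besselKhat1 x := by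
  rw [besselKhat1_eq_integral]
  exact mul_nonneg (by positivity) (setIntegral_nonneg measurableSet_Ioi fun s hs =>
    mul_nonneg (exp_pos _).le (rpow_nonneg (le_of_lt hs) _))

lemma besselKhat1_le_one (x : ℝ) : besselKhat1 x ≤ 1 := by
  rcases eq_or_ne x 0 with rfl | hx
  · simp [besselKhat1]
  have ha : 0 < x ^ 2 / 4 := by positivity
  have hle : ∫ s in Ioi (0 : ℝ), exp (-s - x ^ 2 / (4 * s)) * s ^ (-2 : ℝ)
      ≤ ∫ s in Ioi (0 : ℝ), s ^ (-2 : ℝ) * exp (-(x ^ 2 / 4) * s⁻¹) := by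
    refine integral_mono_of_nonneg ?_ (integrableOn_rpow_neg_two_mul_exp_neg_mul_inv ha) ?_
    · filter_upwards [ae_restrict_mem measurableSet_Ioi] with s hs
      exact mul_nonneg (exp_pos _).le (rpow_nonneg (le_of_lt hs) _)
    · filter_upwards [ae_restrict_mem measurableSet_Ioi] with s (hs : 0 < s)
      rw [mul_comm]
      gcongr
      rw [div_eq_mul_inv, mul_inv]
      linarith
  calc besselKhat1 x ≤ x ^ 2 / 4 * (x ^ 2 / 4)⁻¹ := by
        rw [besselKhat1_eq_integral, ← integral_rpow_neg_two_mul_exp_neg_mul_inv ha]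
        gcongr
    _ = 1 := mul_inv_cancel₀ ha.ne'

lemma measurable_besselKhat1 : Measurable besselKhat1 := by
  unfold besselKhat1 besselK
  refine measurable_id.mul (((measurable_id.pow_const _).div_const _).mul ?_)
  have hF : StronglyMeasurable fun p : ℝ × ℝ =>
      exp (-p.2 - p.1 ^ 2 / (4 * p.2)) * p.2 ^ (-(1 : ℝ) - 1) := by
    apply Measurable.stronglyMeasurable
    fun_prop
  exact (hF.integral_prod_right' (ν := volume.restrict (Ioi 0))).measurable

noncomputable def besselKernel (c : ℝ) (z : ℂ) : ℂ := (besselKhat1 (c * ‖z‖) : ℂ) / conj z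

lemma measurable_besselKernel (c : ℝ) : Measurable (besselKernel c) :=
  (Complex.measurable_ofReal.comp (measurable_besselKhat1.comp (measurable_norm.const_mul c))).div
    Complex.continuous_conj.measurable

lemma norm_besselKernel_le (c : ℝ) (z : ℂ) : ‖besselKernel c z‖ ≤ ‖z‖⁻¹ := by
  rw [besselKernel, norm_div, Complex.norm_real, RCLike.norm_conj, Real.norm_eq_abs,
    abs_of_nonneg (besselKhat1_nonneg _), div_eq_mul_inv]
  exact mul_le_of_le_one_left (inv_nonneg.2 (norm_nonneg z)) (besselKhat1_le_one _)

lemma heatKernelC_eq (t : ℝ) (z : ℂ) :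
    heatKernelC t z = (2 * π * t)⁻¹ * exp (-(2 * t)⁻¹ * ‖z‖ ^ 2) := by
  rw [heatKernelC]; ring_nf

lemma heatKernelC_nonneg {t : ℝ} (ht : 0 ≤ t) (z : ℂ) : 0 ≤ heatKernelC t z := by
  unfold heatKernelC; positivity

lemma continuous_heatKernelC (t : ℝ) : Continuous (heatKernelC t) := by
  unfold heatKernelC; fun_prop

lemma continuousOn_heatKernelC_left (z : ℂ) :
    ContinuousOn (fun t => heatKernelC t z) (Ioi 0) := by
  unfold heatKernelC
  exact ContinuousOn.mul (continuousOn_id.const_mul _ |>.inv₀ fun t (ht : 0 < t) => by positivity)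
    (continuous_exp.comp_continuousOn (continuousOn_const.div (continuousOn_id.const_mul _)
      fun t (ht : 0 < t) => by positivity))

lemma integrable_heatKernelC_mul_inv_norm {t : ℝ} (ht : 0 < t) :
    Integrable fun z : ℂ => heatKernelC t z * ‖z‖⁻¹ := by
  simp_rw [heatKernelC_eq]
  refine (integrable_fun_norm_addHaar volume
    (f := fun r : ℝ => (2 * π * t)⁻¹ * exp (-(2 * t)⁻¹ * r ^ 2) * r⁻¹)).2 ?_
  rw [Complex.finrank_real_complex]
  refine ((integrable_exp_neg_mul_sq (by positivity : 0 < (2 * t)⁻¹)).const_mul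
    (2 * π * t)⁻¹).integrableOn.congr_fun (fun r (hr : 0 < r) => ?_) measurableSet_Ioi
  simp only [Nat.add_one_sub_one, pow_one, smul_eq_mul]
  field_simp

lemma integral_heatKernelC_mul_inv_norm {t : ℝ} (ht : 0 < t) :
    ∫ z : ℂ, heatKernelC t z * ‖z‖⁻¹ = √(π / (2 * t)) := by
  simp_rw [heatKernelC_eq]
  rw [integral_fun_norm_addHaar volume
    (fun r : ℝ => (2 * π * t)⁻¹ * exp (-(2 * t)⁻¹ * r ^ 2) * r⁻¹), Complex.finrank_real_complex]
  have hpolar : ∫ r in Ioi (0 : ℝ), r ^ (2 - 1) • ((2 * π * t)⁻¹ * exp (-(2 * t)⁻¹ * r ^ 2) * r⁻¹)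
      = (2 * π * t)⁻¹ * ∫ r in Ioi (0 : ℝ), exp (-(2 * t)⁻¹ * r ^ 2) := by
    rw [← integral_const_mul]
    refine setIntegral_congr_fun measurableSet_Ioi fun r (hr : 0 < r) => ?_
    simp only [Nat.add_one_sub_one, pow_one, smul_eq_mul]
    field_simp
  rw [hpolar, integral_gaussian_Ioi, Measure.real, Complex.volume_ball]
  simp only [ENNReal.ofReal_one, one_pow, one_mul, ENNReal.coe_toReal, NNReal.coe_real_pi,
    smul_eq_mul, nsmul_eq_mul, Nat.cast_ofNat]
  rw [show π / (2 * t)⁻¹ = (2 * t) ^ 2 * (π / (2 * t)) by field_simp,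
    sqrt_mul (by positivity), sqrt_sq (by positivity)]
  field_simp

lemma heatKernelC_sub_le {τ t T : ℝ} (hτ : 0 < τ) (hτt : τ ≤ t) (htT : t ≤ T) (z₀ z : ℂ) :
    heatKernelC t (z₀ - z) ≤ 2 * T / τ * exp (‖z₀‖ ^ 2 / (2 * τ)) * heatKernelC (2 * T) z := by
  have ht : 0 < t := hτ.trans_le hτt
  have hT : 0 < T := ht.trans_le htT
  have hz : ‖z‖ ^ 2 ≤ 2 * ‖z₀‖ ^ 2 + 2 * ‖z₀ - z‖ ^ 2 := by
    have := norm_sub_le z₀ (z₀ - z)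
    rw [sub_sub_cancel] at this
    nlinarith [norm_nonneg z, sq_nonneg (‖z₀‖ - ‖z₀ - z‖)]
  have hexp : -‖z₀ - z‖ ^ 2 / (2 * t) ≤ ‖z₀‖ ^ 2 / (2 * τ) + -‖z‖ ^ 2 / (2 * (2 * T)) := by
    have h₁ : ‖z₀‖ ^ 2 / (2 * T) ≤ ‖z₀‖ ^ 2 / (2 * τ) := by gcongr; linarith
    have h₂ : ‖z₀ - z‖ ^ 2 / (2 * T) ≤ ‖z₀ - z‖ ^ 2 / (2 * t) := by gcongr
    have h₃ : ‖z‖ ^ 2 / (2 * (2 * T)) ≤ ‖z₀‖ ^ 2 / (2 * T) + ‖z₀ - z‖ ^ 2 / (2 * T) := by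
      rw [← add_div, div_le_div_iff₀ (by positivity) (by positivity)]
      nlinarith
    rw [neg_div, neg_div]
    linarith
  calc heatKernelC t (z₀ - z)
      ≤ (2 * π * τ)⁻¹ * (exp (‖z₀‖ ^ 2 / (2 * τ)) * exp (-‖z‖ ^ 2 / (2 * (2 * T)))) := by
        rw [heatKernelC, ← exp_add]
        gcongr
    _ = 2 * T / τ * exp (‖z₀‖ ^ 2 / (2 * τ)) * heatKernelC (2 * T) z := by
        rw [heatKernelC]
        field_simp

section InvNormBound

variable {h : ℂ → ℂ} {A : ℝ}

lemma exists_integrable_bound_heatKernelC_sub_mul (hA : ∀ z, ‖h z‖ ≤ A * ‖z‖⁻¹) {τ T : ℝ}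
    (hτ : 0 < τ) (hτT : τ ≤ T) (z₀ : ℂ) :
    ∃ bound : ℂ → ℝ, Integrable bound ∧
      ∀ t ∈ Icc τ T, ∀ z, ‖(heatKernelC t (z₀ - z) : ℂ) * h z‖ ≤ bound z := by
  have hT : 0 < T := hτ.trans_le hτT
  refine ⟨fun z => 2 * T / τ * exp (‖z₀‖ ^ 2 / (2 * τ)) * A * (heatKernelC (2 * T) z * ‖z‖⁻¹),
    (integrable_heatKernelC_mul_inv_norm (by linarith)).const_mul _, fun t ht z => ?_⟩
  rw [norm_mul, Complex.norm_real, Real.norm_eq_abs,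
    abs_of_nonneg (heatKernelC_nonneg (hτ.trans_le ht.1).le _)]
  calc heatKernelC t (z₀ - z) * ‖h z‖
      ≤ (2 * T / τ * exp (‖z₀‖ ^ 2 / (2 * τ)) * heatKernelC (2 * T) z) * (A * ‖z‖⁻¹) :=
        mul_le_mul (heatKernelC_sub_le hτ ht.1 ht.2 z₀ z) (hA z) (norm_nonneg _)
          (mul_nonneg (by positivity) (heatKernelC_nonneg (by positivity) z))
    _ = _ := by ring

lemma integrable_heatKernelC_sub_mul (hh : AEStronglyMeasurable h) (hA : ∀ z, ‖h z‖ ≤ A * ‖z‖⁻¹)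
    {t : ℝ} (ht : 0 < t) (z₀ : ℂ) :
    Integrable fun z => (heatKernelC t (z₀ - z) : ℂ) * h z := by
  obtain ⟨bound, hbound, hle⟩ := exists_integrable_bound_heatKernelC_sub_mul hA ht le_rfl z₀
  refine hbound.mono' ?_ (.of_forall (hle t ⟨le_rfl, le_rfl⟩))
  exact (Complex.continuous_ofReal.comp
    ((continuous_heatKernelC t).comp (continuous_sub_left z₀))).aestronglyMeasurable.mul hh

lemma continuousOn_integral_heatKernelC_sub_mul (hh : AEStronglyMeasurable h)
    (hA : ∀ z, ‖h z‖ ≤ A * ‖z‖⁻¹) (z₀ : ℂ) :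
    ContinuousOn (fun t => ∫ z, (heatKernelC t (z₀ - z) : ℂ) * h z) (Ioi 0) := by
  intro t₀ (ht₀ : 0 < t₀)
  obtain ⟨bound, hbound, hle⟩ :=
    exists_integrable_bound_heatKernelC_sub_mul hA (τ := t₀ / 2) (T := 2 * t₀) (by positivity)
      (by linarith) z₀
  refine (continuousAt_of_dominated ?_ ?_ hbound ?_).continuousWithinAt
  · filter_upwards [Ioi_mem_nhds ht₀] with t ht
      using (integrable_heatKernelC_sub_mul hh hA ht z₀).aestronglyMeasurable
  · filter_upwards [Icc_mem_nhds (by linarith : t₀ / 2 < t₀) (by linarith : t₀ < 2 * t₀)]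
      with t ht using .of_forall (hle t ht)
  · exact .of_forall fun z => (Complex.continuous_ofReal.continuousAt.comp
      ((continuousOn_heatKernelC_left (z₀ - z)).continuousAt (Ioi_mem_nhds ht₀))).mul
      continuousAt_const

lemma norm_integral_heatKernelC_mul_le (hA : ∀ z, ‖h z‖ ≤ A * ‖z‖⁻¹) {t : ℝ} (ht : 0 < t) :
    ‖∫ z, (heatKernelC t z : ℂ) * h z‖ ≤ A * √(π / (2 * t)) := by
  calc ‖∫ z, (heatKernelC t z : ℂ) * h z‖
      ≤ ∫ z, ‖(heatKernelC t z : ℂ) * h z‖ := norm_integral_le_integral_norm _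
    _ ≤ ∫ z, A * (heatKernelC t z * ‖z‖⁻¹) := by
        refine integral_mono_of_nonneg (.of_forall fun z => norm_nonneg _)
          ((integrable_heatKernelC_mul_inv_norm ht).const_mul A) (.of_forall fun z => ?_)
        dsimp only
        rw [norm_mul, Complex.norm_real, Real.norm_eq_abs,
          abs_of_nonneg (heatKernelC_nonneg ht.le _), mul_left_comm]
        exact mul_le_mul_of_nonneg_left (hA z) (heatKernelC_nonneg ht.le _)
    _ = A * √(π / (2 * t)) := by rw [integral_const_mul, integral_heatKernelC_mul_inv_norm ht]

end InvNormBound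

theorem stmt18_general (β : ℝ) :
    ∃ C : ℝ, ∀ (f : ℂ → ℂ), Continuous f → ∀ M : ℝ, (∀ z, ‖f z‖ ≤ M) →
      (∀ z₀ : ℂ, ∀ t : ℝ, 0 < t →
        Integrable (fun z : ℂ =>
          (heatKernelC t (z₀ - z) : ℂ) *
            ((besselKhat1 (Real.sqrt (2 * β) * ‖z‖) : ℂ) / (starRingEnd ℂ) z) * f z)) ∧
      (∀ z₀ : ℂ, ContinuousOn
        (fun t : ℝ =>
          ∫ z : ℂ,
            (heatKernelC t (z₀ - z) : ℂ) *
              ((besselKhat1 (Real.sqrt (2 * β) * ‖z‖) : ℂ) / (starRingEnd ℂ) z) * f z)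
        (Set.Ioi 0)) ∧
      (∀ t : ℝ, 0 < t →
        ‖∫ z : ℂ,
            (heatKernelC t z : ℂ) *
              ((besselKhat1 (Real.sqrt (2 * β) * ‖z‖) : ℂ) / (starRingEnd ℂ) z) * f z‖
          ≤ C * M * t ^ (-(1 : ℝ) / 2)) := by
  refine ⟨√(π / 2), fun f hf M hM => ?_⟩
  set h := fun z => besselKernel √(2 * β) z * f z
  have hh : AEStronglyMeasurable h :=
    (measurable_besselKernel _).aestronglyMeasurable.mul hf.aestronglyMeasurable
  have hA : ∀ z, ‖h z‖ ≤ M * ‖z‖⁻¹ := fun z => by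
    rw [norm_mul, mul_comm M]
    exact mul_le_mul (norm_besselKernel_le _ z) (hM z) (norm_nonneg _)
      (inv_nonneg.2 (norm_nonneg z))
  have hassoc : ∀ (p : ℝ) (z : ℂ), (p : ℂ) * ((besselKhat1 (√(2 * β) * ‖z‖) : ℂ) / conj z) * f z
      = p * h z := fun p z => mul_assoc _ _ _
  simp only [hassoc]
  refine ⟨fun z₀ t ht => integrable_heatKernelC_sub_mul hh hA ht z₀,
    continuousOn_integral_heatKernelC_sub_mul hh hA, fun t ht => ?_⟩
  have hsqrt : √(π / (2 * t)) = √(π / 2) * t ^ (-(1 : ℝ) / 2) := by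
    rw [div_mul_eq_div_div, sqrt_div' _ ht.le, sqrt_eq_rpow t, neg_div, rpow_neg ht.le,
      div_eq_mul_inv]
  calc _ ≤ M * √(π / (2 * t)) := norm_integral_heatKernelC_mul_le hA ht
    _ = √(π / 2) * M * t ^ (-(1 : ℝ) / 2) := by rw [hsqrt]; ring

/-- For a bounded continuous `f : ℂ → ℂ` and `z⁰ ∈ ℂ`:
(i) `z ↦ P_t(z⁰ - z) (K̂₁(√(2β)|z|)/z̄) f(z)` is integrable for every `t > 0`, and
`t ↦ ∫ P_t(z⁰ - z) (K̂₁(√(2β)|z|)/z̄) f(z) dz` is continuous on `(0,∞)`;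
(ii) there is `C = C(β)` with `|∫ P_t(z)(K̂₁(√(2β)|z|)/z̄) f(z) dz| ≤ C (sup|f|) t^{-1/2}`
for all `t > 0`. -/
theorem stmt18 (β : ℝ) (hβ : 0 < β) :
    ∃ C : ℝ, ∀ (f : ℂ → ℂ), Continuous f → ∀ M : ℝ, (∀ z, ‖f z‖ ≤ M) →
      (∀ z₀ : ℂ, ∀ t : ℝ, 0 < t →
        Integrable (fun z : ℂ =>
          (heatKernelC t (z₀ - z) : ℂ) *
            ((besselKhat1 (Real.sqrt (2 * β) * ‖z‖) : ℂ) / (starRingEnd ℂ) z) * f z)) ∧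
      (∀ z₀ : ℂ, ContinuousOn
        (fun t : ℝ =>
          ∫ z : ℂ,
            (heatKernelC t (z₀ - z) : ℂ) *
              ((besselKhat1 (Real.sqrt (2 * β) * ‖z‖) : ℂ) / (starRingEnd ℂ) z) * f z)
        (Set.Ioi 0)) ∧
      (∀ t : ℝ, 0 < t →
        ‖∫ z : ℂ,
            (heatKernelC t z : ℂ) *
              ((besselKhat1 (Real.sqrt (2 * β) * ‖z‖) : ℂ) / (starRingEnd ℂ) z) * f z‖
          ≤ C * M * t ^ (-(1 : ℝ) / 2)) :=
  stmt18_general β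
end
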